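/- arXiv:cond-mat/0310735 — 8 statements merged into one kernel-verified Lean document; each statement's English description precedes it below -/
import Mathlib

section
/- Let f : ℝ → ℝ be continuously differentiable, let a < b, and suppose f'(x) < 0 for all x ∈ (a,b) and f(a) > 0 > f(b). Put h₀ = min(f(a), −f(b)). Then for every h with 0 ≤ h < h₀ there exists a 1-periodic solution x of the equation x' = f(x) + h·cos(2πt) satisfying a ≤ x(t) ≤ b for all t ∈ ℝ. -/
/-!
Freeze `f` outside `[a, b]` to a function `g`; the forced field `g x + h cos (2πt)` is then
globally Lipschitz and bounded, so its solutions exist for all time and are unique. Since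
`h < min (f a) (-f b)`, the field points into `[a, b]` at both ends at every time, so `[a, b]` is
forward invariant and the time-one map `P` sends it to itself. Solutions of a scalar equation
cannot cross, so `P` is monotone and has a fixed point by Knaster–Tarski; the solution through it
is 1-periodic, and periodicity carries the forward invariance back to all times.
-/

open Real

/-- A 1-periodic solution of x' = f(x) + h·cos(2πt). -/
def IsPeriodicSolution (f : ℝ → ℝ) (h : ℝ) (x : ℝ → ℝ) : Prop :=
  Differentiable ℝ x ∧
  (∀ t, deriv x t = f (x t) + h * Real.cos (2 * Real.pi * t)) ∧
  ∀ t, x (t + 1) = x t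

open Set Function

theorem MonotoneOn.exists_isFixedPt_of_mapsTo_Icc {α : Type*} [ConditionallyCompleteLattice α]
    {a b : α} (hab : a ≤ b) {f : α → α} (hf : MonotoneOn f (Icc a b))
    (hmaps : MapsTo f (Icc a b) (Icc a b)) : ∃ c ∈ Icc a b, IsFixedPt f c := by
  have : Fact (a ≤ b) := ⟨hab⟩
  let g : Icc a b →o Icc a b := ⟨hmaps.restrict, fun x y hxy => hf x.2 y.2 hxy⟩
  exact ⟨g.lfp, g.lfp.2, congrArg Subtype.val g.map_lfp⟩

section ODE

variable {E : Type*} [NormedAddCommGroup E] [NormedSpace ℝ E] {v : ℝ → E → E} {K : NNReal}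

theorem exists_ODE_solution_of_lipschitzWith_of_norm_le [CompleteSpace E]
    (hlip : ∀ t, LipschitzWith K (v t)) (hcont : ∀ x, Continuous (v · x)) {C : ℝ}
    (hbound : ∀ t x, ‖v t x‖ ≤ C) (x₀ : E) :
    ∃ X : ℝ → E, X 0 = x₀ ∧ ∀ t, HasDerivAt X (v t (X t)) t := by
  have local_sol (n : ℕ) : ∃ X : ℝ → E, X 0 = x₀ ∧
      ∀ t ∈ Ioo (-n : ℝ) n, HasDerivAt X (v t (X t)) t := by
    have hn : (0 : ℝ) ∈ Icc (-n : ℝ) n := ⟨by simp, by simp⟩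
    have hpl : IsPicardLindelof v (⟨0, hn⟩ : Icc (-n : ℝ) n) x₀
        (C.toNNReal * n) 0 C.toNNReal K :=
      { lipschitzOnWith := fun t _ => (hlip t).lipschitzOnWith
        continuousOn := fun x _ => (hcont x).continuousOn
        norm_le := fun t _ x _ => (hbound t x).trans (Real.le_coe_toNNReal C)
        mul_max_le := by simp }
    obtain ⟨X, hX0, hX⟩ := hpl.exists_eq_forall_mem_Icc_hasDerivWithinAt₀
    exact ⟨X, hX0, fun t ht =>
      (hX t (Ioo_subset_Icc_self ht)).hasDerivAt (Icc_mem_nhds ht.1 ht.2)⟩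
  choose sol hsol0 hsol using local_sol
  have agree {m n : ℕ} {s : ℝ} (hm : |s| < m) (hn : |s| < n) : sol m s = sol n s := by
    have hk : |s| < min (m : ℝ) n := lt_min hm hn
    have hs : s ∈ Ioo (-min (m : ℝ) n) (min (m : ℝ) n) := abs_lt.mp hk
    have hsub {j : ℕ} (hj : min (m : ℝ) n ≤ j) :
        Ioo (-min (m : ℝ) n) (min (m : ℝ) n) ⊆ Ioo (-j : ℝ) j :=
      Ioo_subset_Ioo (neg_le_neg hj) hj
    exact ODE_solution_unique_of_mem_Ioo (s := fun _ => univ)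
      (fun t _ => (hlip t).lipschitzOnWith) (t₀ := 0)
      ⟨by linarith [abs_nonneg s], by linarith [abs_nonneg s]⟩
      (fun t ht => ⟨hsol m t (hsub (min_le_left _ _) ht), trivial⟩)
      (fun t ht => ⟨hsol n t (hsub (min_le_right _ _) ht), trivial⟩)
      ((hsol0 m).trans (hsol0 n).symm) hs
  refine ⟨fun t => sol (⌈|t|⌉₊ + 1) t, by simpa using hsol0 1, fun t => ?_⟩
  have hlt (s : ℝ) : |s| < (⌈|s|⌉₊ + 1 : ℕ) := by push_cast; linarith [Nat.le_ceil |s|]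
  refine (hsol _ t (abs_lt.mp (hlt t))).congr_of_eventuallyEq ?_
  filter_upwards [isOpen_Ioo.mem_nhds (abs_lt.mp (hlt t))] with s hs
  exact agree (hlt s) (abs_lt.mpr hs)

theorem ODE_solution_unique_of_lipschitzWith (hlip : ∀ t, LipschitzWith K (v t)) {X Y : ℝ → E}
    (hX : ∀ t, HasDerivAt X (v t (X t)) t) (hY : ∀ t, HasDerivAt Y (v t (Y t)) t) {t₀ : ℝ}
    (h : X t₀ = Y t₀) : X = Y :=
  ODE_solution_unique_univ (s := fun _ => univ) (fun t => (hlip t).lipschitzOnWith)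
    (fun t => ⟨hX t, trivial⟩) (fun t => ⟨hY t, trivial⟩) h

theorem ODE_solution_periodic (hlip : ∀ t, LipschitzWith K (v t))
    {T : ℝ} (hv : ∀ t, v (t + T) = v t) {X : ℝ → E} (hX : ∀ t, HasDerivAt X (v t (X t)) t)
    (hT : X T = X 0) : Periodic X T := by
  have hshift : ∀ t, HasDerivAt (fun s => X (s + T)) (v t (X (t + T))) t := fun t => by
    simpa [hv] using (hX (t + T)).comp_add_const t T
  exact congrFun <|
    ODE_solution_unique_of_lipschitzWith hlip hshift hX (t₀ := 0) (by simpa using hT)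

end ODE

section Scalar

variable {v : ℝ → ℝ → ℝ} {X : ℝ → ℝ} {t₀ t : ℝ}

theorem ODE_solution_le_of_forall_neg (hX : ∀ t, HasDerivAt X (v t (X t)) t) {b : ℝ}
    (hb : ∀ t, v t b < 0) (h₀ : X t₀ ≤ b) (ht : t₀ ≤ t) : X t ≤ b :=
  image_le_of_deriv_right_lt_deriv_boundary' (B := fun _ => b) (B' := 0)
    (fun s _ => (hX s).continuousAt.continuousWithinAt) (fun s _ => (hX s).hasDerivWithinAt)
    h₀ continuousOn_const (fun _ _ => hasDerivWithinAt_const _ _ _)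
    (fun s _ hs => by simpa [hs] using hb s) ⟨ht, le_rfl⟩

theorem ODE_solution_ge_of_forall_pos (hX : ∀ t, HasDerivAt X (v t (X t)) t) {a : ℝ}
    (ha : ∀ t, 0 < v t a) (h₀ : a ≤ X t₀) (ht : t₀ ≤ t) : a ≤ X t :=
  image_le_of_deriv_right_lt_deriv_boundary' (f := fun _ => a) (f' := 0)
    continuousOn_const (fun _ _ => hasDerivWithinAt_const _ _ _) h₀
    (fun s _ => (hX s).continuousAt.continuousWithinAt) (fun s _ => (hX s).hasDerivWithinAt)
    (fun s _ hs => by simpa [← hs] using ha s) ⟨ht, le_rfl⟩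

theorem ODE_solution_le_of_le {K : NNReal} (hlip : ∀ t, LipschitzWith K (v t)) {Y : ℝ → ℝ}
    (hX : ∀ t, HasDerivAt X (v t (X t)) t) (hY : ∀ t, HasDerivAt Y (v t (Y t)) t)
    (h₀ : X t₀ ≤ Y t₀) (t : ℝ) : X t ≤ Y t := by
  by_contra! hlt
  have hcont : ContinuousOn (X - Y) (uIcc t₀ t) := fun s _ =>
    ((hX s).continuousAt.sub (hY s).continuousAt).continuousWithinAt
  obtain ⟨s, -, hs⟩ := intermediate_value_uIcc hcont
    (mem_uIcc.mpr (Or.inl ⟨sub_nonpos.mpr h₀, sub_nonneg.mpr hlt.le⟩))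
  have := ODE_solution_unique_of_lipschitzWith hlip hX hY (sub_eq_zero.mp hs)
  exact hlt.ne' (congrFun this t)

end Scalar

theorem exists_periodic_ODE_solution_mem_Icc {v : ℝ → ℝ → ℝ} {K : NNReal} {C T a b : ℝ}
    (hlip : ∀ t, LipschitzWith K (v t)) (hcont : ∀ x, Continuous (v · x))
    (hbound : ∀ t x, ‖v t x‖ ≤ C) (hT : 0 < T) (hv : ∀ t, v (t + T) = v t)
    (hab : a ≤ b) (ha : ∀ t, 0 < v t a) (hb : ∀ t, v t b < 0) :
    ∃ X : ℝ → ℝ, (∀ t, HasDerivAt X (v t (X t)) t) ∧ Periodic X T ∧ ∀ t, X t ∈ Icc a b := by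
  choose sol hsol0 hsol using
    exists_ODE_solution_of_lipschitzWith_of_norm_le hlip hcont hbound
  have hmem {x : ℝ} (hx : x ∈ Icc a b) {t : ℝ} (ht : 0 ≤ t) : sol x t ∈ Icc a b :=
    ⟨ODE_solution_ge_of_forall_pos (hsol x) ha ((hsol0 x).symm ▸ hx.1) ht,
      ODE_solution_le_of_forall_neg (hsol x) hb ((hsol0 x).symm ▸ hx.2) ht⟩
  obtain ⟨c, hc, hfix⟩ := MonotoneOn.exists_isFixedPt_of_mapsTo_Icc (f := fun x => sol x T) hab
    (fun x _ y _ hxy => ODE_solution_le_of_le hlip (hsol x) (hsol y)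
      (t₀ := 0) (by rwa [hsol0, hsol0]) T)
    (fun x hx => hmem hx hT.le)
  have hper : Periodic (sol c) T :=
    ODE_solution_periodic hlip hv (hsol c) (hfix.trans (hsol0 c).symm)
  refine ⟨sol c, hsol c, hper, fun t => ?_⟩
  obtain ⟨s, hs, hts⟩ := hper.exists_mem_Ico₀ hT t
  exact hts ▸ hmem hc hs.1

theorem LipschitzOnWith.lipschitzWith_IccExtend {β : Type*} [PseudoMetricSpace β] {f : ℝ → β}
    {K : NNReal} {a b : ℝ} (hab : a ≤ b) (hf : LipschitzOnWith K f (Icc a b)) :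
    LipschitzWith K (IccExtend hab ((Icc a b).domRestrict f)) :=
  (mul_one K).symm ▸ hf.to_restrict.comp (LipschitzWith.projIcc hab)

theorem small_h_existence_general (f : ℝ → ℝ) (hf : ContDiff ℝ 1 f)
    (a b : ℝ) (hab : a < b)
    (h : ℝ) (hh0 : 0 ≤ h) (hh : h < min (f a) (-f b)) :
    ∃ x : ℝ → ℝ, IsPeriodicSolution f h x ∧ ∀ t, a ≤ x t ∧ x t ≤ b := by
  set g := IccExtend hab.le ((Icc a b).domRestrict f)
  have hg {x : ℝ} (hx : x ∈ Icc a b) : g x = f x := IccExtend_of_mem hab.le _ hx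
  obtain ⟨K, hK⟩ := hf.locallyLipschitz.locallyLipschitzOn.exists_lipschitzOnWith_of_compact
    (isCompact_Icc (a := a) (b := b))
  obtain ⟨M, hM⟩ := (isCompact_Icc (a := a) (b := b)).exists_bound_of_continuousOn
    hf.continuous.continuousOn
  have hforce (t : ℝ) : |h * cos (2 * π * t)| ≤ h := by
    rw [abs_mul, abs_of_nonneg hh0]
    exact mul_le_of_le_one_right hh0 (abs_cos_le_one _)
  obtain ⟨X, hX, hper, hmem⟩ := exists_periodic_ODE_solution_mem_Icc
    (v := fun t x => g x + h * cos (2 * π * t)) (C := M + h) (T := 1)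
    (fun _ => .of_dist_le_mul fun x y => by
      simpa only [dist_add_right] using (hK.lipschitzWith_IccExtend hab.le).dist_le_mul x y)
    (fun _ => by fun_prop)
    (fun t x => (norm_add_le _ _).trans (add_le_add (hM _ (projIcc a b hab.le x).2) (hforce t)))
    one_pos (fun t => by ext x; rw [mul_add, mul_one, cos_add_two_pi]) hab.le
    (fun t => by
      rw [hg (left_mem_Icc.2 hab.le)]
      linarith [neg_abs_le (h * cos (2 * π * t)), hforce t, min_le_left (f a) (-f b)])
    (fun t => by
      rw [hg (right_mem_Icc.2 hab.le)]
      linarith [le_abs_self (h * cos (2 * π * t)), hforce t, min_le_right (f a) (-f b)])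
  exact ⟨X, ⟨fun t => (hX t).differentiableAt, fun t => by rw [(hX t).deriv, hg (hmem t)], hper⟩,
    hmem⟩

theorem small_h_existence (f : ℝ → ℝ) (hf : ContDiff ℝ 1 f)
    (a b : ℝ) (hab : a < b)
    (hder : ∀ x ∈ Set.Ioo a b, deriv f x < 0)
    (hfa : 0 < f a) (hfb : f b < 0)
    (h : ℝ) (hh0 : 0 ≤ h) (hh : h < min (f a) (-f b)) :
    ∃ x : ℝ → ℝ, IsPeriodicSolution f h x ∧ ∀ t, a ≤ x t ∧ x t ≤ b :=
  small_h_existence_general f hf a b hab h hh0 hh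
end

section
/- Let f : ℝ → ℝ be continuously differentiable, let a < b, and suppose f'(x) < 0 for all x ∈ (a,b) and f(a) > 0 > f(b). Put h₀ = min(f(a), −f(b)). Then for every h with 0 ≤ h < h₀, every 1-periodic solution x of the equation x' = f(x) + h·cos(2πt) that satisfies a ≤ x(t) ≤ b for all t ∈ ℝ in fact satisfies a < x(t) < b for all t and is stable, i.e. ∫₀¹ f'(x(s)) ds < 0. -/
/-!
At a time where a bounded solution touches the barrier `a` it has a minimum, so `x' = 0` there;
but `x' = f a + h cos(2πt) ≥ f a - h > 0`. The same argument at `b` keeps `x` strictly inside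
`(a, b)`, where `f' < 0`, and integrating gives stability.
-/

open Real

theorem lt_of_forall_le_of_deriv_ne_zero {x : ℝ → ℝ} {a t : ℝ} (hle : ∀ s, a ≤ x s)
    (hderiv : x t = a → deriv x t ≠ 0) : a < x t := by
  refine (hle t).lt_of_ne fun hat => hderiv hat.symm ?_
  exact IsLocalMin.deriv_eq_zero (Filter.Eventually.of_forall fun s => hat ▸ hle s)

theorem lt_of_forall_ge_of_deriv_ne_zero {x : ℝ → ℝ} {b t : ℝ} (hge : ∀ s, x s ≤ b)
    (hderiv : x t = b → deriv x t ≠ 0) : x t < b := by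
  refine (hge t).lt_of_ne fun htb => hderiv htb ?_
  exact IsLocalMax.deriv_eq_zero (Filter.Eventually.of_forall fun s => htb ▸ hge s)

theorem intervalIntegral_neg_of_neg_on {g : ℝ → ℝ} {a b : ℝ}
    (hg : IntervalIntegrable g MeasureTheory.volume a b)
    (hneg : ∀ s ∈ Set.Ioo a b, g s < 0) (hab : a < b) : ∫ s in a..b, g s < 0 := by
  have hpos : 0 < ∫ s in a..b, -g s :=
    intervalIntegral.intervalIntegral_pos_of_pos_on (by exact hg.neg)
      (fun s hs => neg_pos.2 (hneg s hs)) hab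
  rwa [intervalIntegral.integral_neg, neg_pos] at hpos

theorem mem_Ioo_of_isPeriodicSolution {f : ℝ → ℝ} {a b h : ℝ} (hh0 : 0 ≤ h)
    (hh : h < min (f a) (-f b)) {x : ℝ → ℝ} (hx : IsPeriodicSolution f h x)
    (hrange : ∀ t, a ≤ x t ∧ x t ≤ b) (t : ℝ) : x t ∈ Set.Ioo a b := by
  have hlow : -h ≤ h * cos (2 * π * t) := by nlinarith [neg_one_le_cos (2 * π * t)]
  have hup : h * cos (2 * π * t) ≤ h := by nlinarith [cos_le_one (2 * π * t)]
  have hha : h < f a := hh.trans_le (min_le_left _ _)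
  have hhb : h < -f b := hh.trans_le (min_le_right _ _)
  constructor
  · refine lt_of_forall_le_of_deriv_ne_zero (fun s => (hrange s).1) fun hat => ?_
    rw [hx.2.1, hat]
    exact (by linarith : 0 < f a + h * cos (2 * π * t)).ne'
  · refine lt_of_forall_ge_of_deriv_ne_zero (fun s => (hrange s).2) fun htb => ?_
    rw [hx.2.1, htb]
    exact (by linarith : f b + h * cos (2 * π * t) < 0).ne

theorem small_h_stability_general (f : ℝ → ℝ) (hf : ContDiff ℝ 1 f)
    (a b : ℝ)
    (hder : ∀ x ∈ Set.Ioo a b, deriv f x < 0)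
    (h : ℝ) (hh0 : 0 ≤ h) (hh : h < min (f a) (-f b))
    (x : ℝ → ℝ) (hx : IsPeriodicSolution f h x)
    (hrange : ∀ t, a ≤ x t ∧ x t ≤ b) :
    (∀ t, a < x t ∧ x t < b) ∧ (∫ s in (0:ℝ)..1, deriv f (x s)) < 0 := by
  have hinside := mem_Ioo_of_isPeriodicSolution hh0 hh hx hrange
  have hcont : Continuous fun s => deriv f (x s) :=
    (hf.continuous_deriv le_rfl).comp hx.1.continuous
  exact ⟨hinside, intervalIntegral_neg_of_neg_on (hcont.intervalIntegrable 0 1)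
    (fun s _ => hder _ (hinside s)) zero_lt_one⟩

theorem small_h_stability (f : ℝ → ℝ) (hf : ContDiff ℝ 1 f)
    (a b : ℝ) (hab : a < b)
    (hder : ∀ x ∈ Set.Ioo a b, deriv f x < 0)
    (hfa : 0 < f a) (hfb : f b < 0)
    (h : ℝ) (hh0 : 0 ≤ h) (hh : h < min (f a) (-f b))
    (x : ℝ → ℝ) (hx : IsPeriodicSolution f h x)
    (hrange : ∀ t, a ≤ x t ∧ x t ≤ b) :
    (∀ t, a < x t ∧ x t < b) ∧ (∫ s in (0:ℝ)..1, deriv f (x s)) < 0 :=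
  small_h_stability_general f hf a b hder h hh0 hh x hx hrange
end

section
/- Let f : ℝ → ℝ be continuously differentiable, let a < b, and suppose f'(x) < 0 for all x ∈ (a,b) and f(a) > 0 > f(b). Put h₀ = min(f(a), −f(b)). Then for every h with 0 ≤ h < h₀ there is a unique 1-periodic solution x of the equation x' = f(x) + h·cos(2πt) satisfying a ≤ x(t) ≤ b for all t ∈ ℝ; that is, any two 1-periodic solutions whose values all lie in [a,b] are equal. -/
open Real

/-!
Uniqueness: if `x` and `y` are solutions with values in `[a, b]`, where `f` is strictly
decreasing, then `(x - y)²` has derivative `2 (x - y) (f x - f y) ≤ 0`, with equality only where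
`x = y`. Being periodic and nonincreasing it is constant, so `x = y`.

Existence is the method of lower and upper solutions: as `h < min (f a) (-f b)`, the constants
`a` and `b` are a lower and an upper solution. Take `L` above the Lipschitz constant of `f` on
`[a, b]`, so that `u ↦ f u + L u` is nondecreasing there, and write the equation as
`x' + L x = f x + L x + h cos 2πt`. The map sending `x` to the bounded solution
`t ↦ ∫_{-∞}^t e^{L (s - t)} (f (x s) + L x s + h cos 2πs) ds` of this linear equation is then
monotone and preserves periodic functions with values in `[a, b]`. Iterating it from `a` gives a
nondecreasing sequence whose pointwise limit is, by dominated convergence, a fixed point, that is,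
a periodic solution.
-/

open Set Filter Topology MeasureTheory Function

section IntegralIic

variable {g : ℝ → ℝ}

lemma intervalIntegrable_of_forall_integrableOn_Iic (hg : ∀ t, IntegrableOn g (Iic t))
    (a b : ℝ) : IntervalIntegrable g volume a b :=
  intervalIntegrable_iff.2 <| (hg (max a b)).mono_set Ioc_subset_Iic_self

lemma integral_Iic_eq_add_intervalIntegral (hg : ∀ t, IntegrableOn g (Iic t)) (t₀ t : ℝ) :
    ∫ s in Iic t, g s = (∫ s in Iic t₀, g s) + ∫ s in t₀..t, g s := by
  rw [← intervalIntegral.integral_Iic_sub_Iic (hg t₀) (hg t)]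
  ring

lemma continuous_integral_Iic (hg : ∀ t, IntegrableOn g (Iic t)) :
    Continuous fun t => ∫ s in Iic t, g s := by
  rw [funext (integral_Iic_eq_add_intervalIntegral hg 0)]
  exact continuous_const.add <|
    intervalIntegral.continuous_primitive (intervalIntegrable_of_forall_integrableOn_Iic hg) 0

lemma hasDerivAt_integral_Iic (hg : ∀ t, IntegrableOn g (Iic t)) (hgc : Continuous g) (t : ℝ) :
    HasDerivAt (fun u => ∫ s in Iic u, g s) (g t) t := by
  rw [funext (integral_Iic_eq_add_intervalIntegral hg t)]
  exact (intervalIntegral.integral_hasDerivAt_right (hgc.intervalIntegrable _ _)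
    (hgc.stronglyMeasurableAtFilter _ _) hgc.continuousAt).const_add _

end IntegralIic

noncomputable def expSmoothing (L : ℝ) (w : ℝ → ℝ) (t : ℝ) : ℝ :=
  ∫ s in Iic t, exp (L * (s - t)) * w s

section ExpSmoothing

variable {L C : ℝ} {w : ℝ → ℝ}

lemma integrableOn_exp_mul_sub_Iic (hL : 0 < L) (u t : ℝ) :
    IntegrableOn (fun s => exp (L * (s - u))) (Iic t) := by
  have hsplit : (fun s => exp (L * (s - u))) = fun s => exp (L * s) / exp (L * u) := by
    ext s
    rw [mul_sub, exp_sub]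
  rw [hsplit]
  exact (integrableOn_exp_mul_Iic hL t).div_const _

lemma integral_exp_mul_sub_Iic (hL : 0 < L) (t : ℝ) :
    ∫ s in Iic t, exp (L * (s - t)) = 1 / L := by
  simp only [mul_sub, exp_sub, integral_div, integral_exp_mul_Iic hL]
  field_simp

lemma integrableOn_exp_mul_sub_mul (hL : 0 < L) (hw : Measurable w) (hC : ∀ s, |w s| ≤ C)
    (u t : ℝ) : IntegrableOn (fun s => exp (L * (s - u)) * w s) (Iic t) :=
  (integrableOn_exp_mul_sub_Iic hL u t).mul_bdd hw.aestronglyMeasurable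
    (Eventually.of_forall hC)

lemma expSmoothing_const (hL : 0 < L) (c t : ℝ) : expSmoothing L (fun _ => c) t = c / L := by
  rw [expSmoothing, integral_mul_const, integral_exp_mul_sub_Iic hL]
  ring

lemma expSmoothing_mono (hL : 0 < L) {w₁ w₂ : ℝ → ℝ} {C₁ C₂ : ℝ}
    (hw₁ : Measurable w₁) (hC₁ : ∀ s, |w₁ s| ≤ C₁) (hw₂ : Measurable w₂) (hC₂ : ∀ s, |w₂ s| ≤ C₂)
    (hle : w₁ ≤ w₂) : expSmoothing L w₁ ≤ expSmoothing L w₂ := fun t =>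
  setIntegral_mono (integrableOn_exp_mul_sub_mul hL hw₁ hC₁ t t)
    (integrableOn_exp_mul_sub_mul hL hw₂ hC₂ t t)
    fun s => mul_le_mul_of_nonneg_left (hle s) (exp_pos _).le

lemma expSmoothing_mem_Icc (hL : 0 < L) (hw : Measurable w) {m M : ℝ}
    (hmM : ∀ s, w s ∈ Icc m M) (t : ℝ) : expSmoothing L w t ∈ Icc (m / L) (M / L) := by
  have hC : ∀ s, |w s| ≤ max |m| |M| := fun s => abs_le_max_abs_abs (hmM s).1 (hmM s).2
  rw [← expSmoothing_const hL m t, ← expSmoothing_const hL M t]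
  exact ⟨expSmoothing_mono hL measurable_const (fun _ => le_rfl) hw hC (fun s => (hmM s).1) t,
    expSmoothing_mono hL hw hC measurable_const (fun _ => le_rfl) (fun s => (hmM s).2) t⟩

lemma periodic_expSmoothing {p : ℝ} (hw : Periodic w p) :
    Periodic (expSmoothing L w) p := fun t => by
  have key := (measurePreserving_add_right volume p).setIntegral_preimage_emb
    (measurableEmbedding_addRight p) (fun s => exp (L * (s - (t + p))) * w s) (Iic (t + p))
  rw [show (· + p) ⁻¹' Iic (t + p) = Iic t by ext; simp] at key
  simp only [expSmoothing, ← key, hw _, add_sub_add_right_eq_sub]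

lemma expSmoothing_eq_exp_mul (L : ℝ) (w : ℝ → ℝ) (t : ℝ) :
    expSmoothing L w t = exp (-(L * t)) * ∫ s in Iic t, exp (L * s) * w s := by
  rw [expSmoothing, ← integral_const_mul]
  congr 1 with s
  rw [← mul_assoc, ← exp_add]
  ring_nf

lemma continuous_expSmoothing (hL : 0 < L) (hw : Measurable w) (hC : ∀ s, |w s| ≤ C) :
    Continuous (expSmoothing L w) := by
  rw [funext (expSmoothing_eq_exp_mul L w)]
  refine (by fun_prop : Continuous fun t => exp (-(L * t))).mul (continuous_integral_Iic ?_)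
  simpa using integrableOn_exp_mul_sub_mul hL hw hC 0

lemma hasDerivAt_expSmoothing (hL : 0 < L) (hw : Continuous w) (hC : ∀ s, |w s| ≤ C) (t : ℝ) :
    HasDerivAt (expSmoothing L w) (w t - L * expSmoothing L w t) t := by
  have hint : ∀ t, IntegrableOn (fun s => exp (L * s) * w s) (Iic t) := by
    simpa using integrableOn_exp_mul_sub_mul hL hw.measurable hC 0
  have hexp : HasDerivAt (fun u => exp (-(L * u))) (-L * exp (-(L * t))) t := by
    simpa [mul_comm] using ((hasDerivAt_id t).const_mul L).neg.exp
  have hprod := hexp.fun_mul (hasDerivAt_integral_Iic hint (by fun_prop) t)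
  rw [← funext (expSmoothing_eq_exp_mul L w)] at hprod
  refine hprod.congr_deriv ?_
  rw [expSmoothing_eq_exp_mul, ← mul_assoc, ← exp_add, neg_add_cancel, exp_zero]
  ring

lemma tendsto_expSmoothing (hL : 0 < L) {w : ℕ → ℝ → ℝ} {w' : ℝ → ℝ}
    (hw : ∀ n, Measurable (w n)) (hC : ∀ n s, |w n s| ≤ C)
    (hlim : ∀ s, Tendsto (fun n => w n s) atTop (𝓝 (w' s))) (t : ℝ) :
    Tendsto (fun n => expSmoothing L (w n) t) atTop (𝓝 (expSmoothing L w' t)) :=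
  tendsto_integral_of_dominated_convergence (fun s => exp (L * (s - t)) * C)
    (fun n => ((by fun_prop : Measurable fun s => exp (L * (s - t))).mul
      (hw n)).aestronglyMeasurable)
    ((integrableOn_exp_mul_sub_Iic hL t t).mul_const C)
    (fun n => Eventually.of_forall fun s => by
      rw [norm_mul, norm_of_nonneg (exp_pos _).le, norm_eq_abs]
      exact mul_le_mul_of_nonneg_left (hC n s) (exp_pos _).le)
    (Eventually.of_forall fun s => (hlim s).const_mul _)

end ExpSmoothing

lemma exists_isFixedPt_of_monotone_iterate {α β : Type*} [Preorder β] [TopologicalSpace β]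
    [T2Space β] {Φ : (α → β) → α → β} {P : (α → β) → Prop}
    (hmaps : ∀ x, P x → P (Φ x)) (hmono : ∀ x y, P x → P y → x ≤ y → Φ x ≤ Φ y)
    (hlim : ∀ X : ℕ → α → β, Monotone X → (∀ n, P (X n)) →
      ∃ x, P x ∧ ∀ t, Tendsto (fun n => X n t) atTop (𝓝 (x t)))
    (hcont : ∀ (X : ℕ → α → β) x, (∀ n, P (X n)) → P x →
      (∀ t, Tendsto (fun n => X n t) atTop (𝓝 (x t))) →
      ∀ t, Tendsto (fun n => Φ (X n) t) atTop (𝓝 (Φ x t)))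
    {x₀ : α → β} (hP₀ : P x₀) (hx₀ : x₀ ≤ Φ x₀) : ∃ x, P x ∧ IsFixedPt Φ x := by
  set X : ℕ → α → β := fun n => Φ^[n] x₀
  have hPX : ∀ n, P (X n) := fun n => by
    induction n with
    | zero => exact hP₀
    | succ n ih => simpa only [X, iterate_succ_apply'] using hmaps _ ih
  have hXmono : Monotone X := monotone_nat_of_le_succ fun n => by
    induction n with
    | zero => exact hx₀
    | succ n ih =>
      simpa only [X, iterate_succ_apply'] using hmono _ _ (hPX n) (hPX (n + 1)) ih
  obtain ⟨x, hPx, hXx⟩ := hlim X hXmono hPX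
  refine ⟨x, hPx, funext fun t => tendsto_nhds_unique (hcont X x hPX hPx hXx t) ?_⟩
  simpa only [X, comp_def, iterate_succ_apply'] using (hXx t).comp (tendsto_add_atTop_nat 1)

lemma Monotone.exists_tendsto_of_mem_Icc {X : ℕ → ℝ → ℝ} {a b p : ℝ} (hX : Monotone X)
    (hXm : ∀ n, Measurable (X n)) (hXp : ∀ n, Periodic (X n) p) (hXI : ∀ n t, X n t ∈ Icc a b) :
    ∃ x, (Measurable x ∧ Periodic x p ∧ ∀ t, x t ∈ Icc a b) ∧
      ∀ t, Tendsto (fun n => X n t) atTop (𝓝 (x t)) := by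
  have hbdd : ∀ t, BddAbove (range fun n => X n t) := fun t =>
    ⟨b, forall_mem_range.2 fun n => (hXI n t).2⟩
  refine ⟨fun t => ⨆ n, X n t, ⟨Measurable.iSup hXm, fun t => ?_, fun t => ?_⟩,
    fun t => tendsto_atTop_ciSup (fun m n hmn => hX hmn t) (hbdd t)⟩
  · simp only [hXp _ t]
  · exact ⟨(hXI 0 t).1.trans (le_ciSup (hbdd t) 0), ciSup_le fun n => (hXI n t).2⟩

lemma LipschitzOnWith.monotoneOn_add_mul {f : ℝ → ℝ} {s : Set ℝ} {K : NNReal} {L : ℝ}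
    (hf : LipschitzOnWith K f s) (hKL : K ≤ L) : MonotoneOn (fun u => f u + L * u) s := by
  intro u hu v hv huv
  have hdist := hf.dist_le_mul v hv u hu
  rw [dist_eq_norm, dist_eq_norm, norm_eq_abs, norm_eq_abs, abs_of_nonneg (sub_nonneg.2 huv)]
    at hdist
  nlinarith [neg_abs_le (f v - f u), sub_nonneg.2 huv]

-- Clamping to `[a, b]` keeps the nonlinearity monotone, continuous and bounded on all of `ℝ`.
noncomputable def clampedShift (f : ℝ → ℝ) (L : ℝ) {a b : ℝ} (hab : a ≤ b) : ℝ → ℝ :=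
  IccExtend hab fun u => f u + L * u

noncomputable def solutionMap (f φ : ℝ → ℝ) (L : ℝ) {a b : ℝ} (hab : a ≤ b) (x : ℝ → ℝ) :
    ℝ → ℝ :=
  expSmoothing L fun s => clampedShift f L hab (x s) + φ s

section SolutionMap

variable {f φ : ℝ → ℝ} {a b L : ℝ} (hab : a ≤ b)

lemma clampedShift_of_mem {u : ℝ} (hu : u ∈ Icc a b) : clampedShift f L hab u = f u + L * u :=
  IccExtend_of_mem hab _ hu

lemma monotone_clampedShift (hmono : MonotoneOn (fun u => f u + L * u) (Icc a b)) :
    Monotone (clampedShift f L hab) :=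
  (monotoneOn_iff_monotone.1 hmono).IccExtend hab

lemma continuous_clampedShift (hf : ContinuousOn f (Icc a b)) :
    Continuous (clampedShift f L hab) :=
  continuous_IccExtend_iff.2 (hf.add (continuousOn_const.mul continuousOn_id)).domRestrict

lemma clampedShift_add_mem_Icc (hmono : MonotoneOn (fun u => f u + L * u) (Icc a b))
    (ha : ∀ t, 0 ≤ f a + φ t) (hb : ∀ t, f b + φ t ≤ 0) (u t : ℝ) :
    clampedShift f L hab u + φ t ∈ Icc (L * a) (L * b) := by
  have hu := (projIcc a b hab u).2
  have hlo := hmono (left_mem_Icc.2 hab) hu hu.1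
  have hhi := hmono hu (right_mem_Icc.2 hab) hu.2
  simp only [clampedShift, IccExtend, Function.comp_apply]
  constructor <;> linarith [ha t, hb t]

lemma measurable_clampedShift_comp_add (hf : ContinuousOn f (Icc a b)) (hφ : Continuous φ)
    {x : ℝ → ℝ} (hx : Measurable x) : Measurable fun s => clampedShift f L hab (x s) + φ s :=
  ((continuous_clampedShift hab hf).measurable.comp hx).add hφ.measurable

lemma solutionMap_mem_Icc (hf : ContinuousOn f (Icc a b)) (hφ : Continuous φ) (hL : 0 < L)
    (hbd : ∀ u t, clampedShift f L hab u + φ t ∈ Icc (L * a) (L * b)) {x : ℝ → ℝ}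
    (hx : Measurable x) (t : ℝ) : solutionMap f φ L hab x t ∈ Icc a b := by
  have hmem := expSmoothing_mem_Icc hL (measurable_clampedShift_comp_add hab hf hφ hx)
    (fun s => hbd (x s) s) t
  rwa [mul_div_cancel_left₀ _ hL.ne', mul_div_cancel_left₀ _ hL.ne'] at hmem

lemma continuous_solutionMap (hf : ContinuousOn f (Icc a b)) (hφ : Continuous φ) (hL : 0 < L)
    (hbd : ∀ u t, clampedShift f L hab u + φ t ∈ Icc (L * a) (L * b)) {x : ℝ → ℝ}
    (hx : Measurable x) : Continuous (solutionMap f φ L hab x) :=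
  continuous_expSmoothing hL (measurable_clampedShift_comp_add hab hf hφ hx)
    fun s => abs_le_max_abs_abs (hbd (x s) s).1 (hbd (x s) s).2

lemma periodic_solutionMap {p : ℝ} {x : ℝ → ℝ} (hx : Periodic x p) (hφp : Periodic φ p) :
    Periodic (solutionMap f φ L hab x) p :=
  periodic_expSmoothing fun s => by simp only [hx s, hφp s]

lemma solutionMap_mono (hf : ContinuousOn f (Icc a b)) (hφ : Continuous φ) (hL : 0 < L)
    (hmono : MonotoneOn (fun u => f u + L * u) (Icc a b))
    (hbd : ∀ u t, clampedShift f L hab u + φ t ∈ Icc (L * a) (L * b)) {x y : ℝ → ℝ}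
    (hx : Measurable x) (hy : Measurable y) (hxy : x ≤ y) :
    solutionMap f φ L hab x ≤ solutionMap f φ L hab y :=
  expSmoothing_mono hL (measurable_clampedShift_comp_add hab hf hφ hx)
    (fun s => abs_le_max_abs_abs (hbd (x s) s).1 (hbd (x s) s).2)
    (measurable_clampedShift_comp_add hab hf hφ hy)
    (fun s => abs_le_max_abs_abs (hbd (y s) s).1 (hbd (y s) s).2)
    fun s => add_le_add_left (monotone_clampedShift hab hmono (hxy s)) _

lemma tendsto_solutionMap (hf : ContinuousOn f (Icc a b)) (hφ : Continuous φ) (hL : 0 < L)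
    (hbd : ∀ u t, clampedShift f L hab u + φ t ∈ Icc (L * a) (L * b))
    {X : ℕ → ℝ → ℝ} {x : ℝ → ℝ} (hX : ∀ n, Measurable (X n))
    (hlim : ∀ t, Tendsto (fun n => X n t) atTop (𝓝 (x t))) (t : ℝ) :
    Tendsto (fun n => solutionMap f φ L hab (X n) t) atTop (𝓝 (solutionMap f φ L hab x t)) :=
  tendsto_expSmoothing hL (fun n => measurable_clampedShift_comp_add hab hf hφ (hX n))
    (fun n s => abs_le_max_abs_abs (hbd (X n s) s).1 (hbd (X n s) s).2)
    (fun s => (((continuous_clampedShift hab hf).tendsto _).comp (hlim s)).add_const _) t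

lemma hasDerivAt_of_isFixedPt_solutionMap (hf : ContinuousOn f (Icc a b)) (hφ : Continuous φ)
    (hL : 0 < L) (hbd : ∀ u t, clampedShift f L hab u + φ t ∈ Icc (L * a) (L * b))
    {x : ℝ → ℝ} (hx : Measurable x) (hfix : IsFixedPt (solutionMap f φ L hab) x)
    (hxI : ∀ t, x t ∈ Icc a b) (t : ℝ) : HasDerivAt x (f (x t) + φ t) t := by
  have hxc : Continuous x := hfix.eq ▸ continuous_solutionMap hab hf hφ hL hbd hx
  have hd : HasDerivAt (solutionMap f φ L hab x)
      (clampedShift f L hab (x t) + φ t - L * solutionMap f φ L hab x t) t :=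
    hasDerivAt_expSmoothing hL (((continuous_clampedShift hab hf).comp hxc).add hφ)
      (fun s => abs_le_max_abs_abs (hbd (x s) s).1 (hbd (x s) s).2) t
  rw [hfix.eq, clampedShift_of_mem hab (hxI t)] at hd
  exact hd.congr_deriv (by ring)

theorem exists_periodic_hasDerivAt_mem_Icc (hab : a ≤ b) (hf : ContinuousOn f (Icc a b))
    (hφ : Continuous φ) (hL : 0 < L) (hmono : MonotoneOn (fun u => f u + L * u) (Icc a b))
    {p : ℝ} (hφp : Periodic φ p) (ha : ∀ t, 0 ≤ f a + φ t) (hb : ∀ t, f b + φ t ≤ 0) :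
    ∃ x : ℝ → ℝ, (∀ t, HasDerivAt x (f (x t) + φ t) t) ∧ Periodic x p ∧ ∀ t, x t ∈ Icc a b := by
  have hbd := clampedShift_add_mem_Icc hab hmono ha hb
  obtain ⟨x, ⟨hxm, hxp, hxI⟩, hfix⟩ := exists_isFixedPt_of_monotone_iterate
    (Φ := solutionMap f φ L hab) (P := fun x => Measurable x ∧ Periodic x p ∧ ∀ t, x t ∈ Icc a b)
    (fun x ⟨hxm, hxp, _⟩ => ⟨(continuous_solutionMap hab hf hφ hL hbd hxm).measurable,
      periodic_solutionMap hab hxp hφp, solutionMap_mem_Icc hab hf hφ hL hbd hxm⟩)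
    (fun x y hx hy hxy => solutionMap_mono hab hf hφ hL hmono hbd hx.1 hy.1 hxy)
    (fun X hX hPX => hX.exists_tendsto_of_mem_Icc (fun n => (hPX n).1) (fun n => (hPX n).2.1)
      fun n => (hPX n).2.2)
    (fun X x hPX _ hlim => tendsto_solutionMap hab hf hφ hL hbd (fun n => (hPX n).1) hlim)
    (x₀ := fun _ => a) ⟨measurable_const, fun _ => rfl, fun _ => left_mem_Icc.2 hab⟩
    fun t => (solutionMap_mem_Icc hab hf hφ hL hbd measurable_const t).1
  exact ⟨x, hasDerivAt_of_isFixedPt_solutionMap hab hf hφ hL hbd hxm hfix hxI, hxp, hxI⟩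

end SolutionMap

lemma Antitone.eq_of_periodic {V : ℝ → ℝ} {p : ℝ} (hV : Antitone V) (hVp : Periodic V p)
    (hp : 0 < p) (s t : ℝ) : V s = V t := by
  suffices key : ∀ s t, V t ≤ V s from le_antisymm (key t s) (key s t)
  intro s t
  obtain ⟨n, hn⟩ := exists_nat_ge ((s - t) / p)
  rw [← hVp.nat_mul n t]
  exact hV (by linarith [(div_le_iff₀ hp).1 hn])

lemma StrictAntiOn.sub_mul_sub_neg {f : ℝ → ℝ} {s : Set ℝ} (hf : StrictAntiOn f s) {u v : ℝ}
    (hu : u ∈ s) (hv : v ∈ s) (huv : u ≠ v) : (u - v) * (f u - f v) < 0 := by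
  rcases huv.lt_or_gt with hlt | hgt
  · exact mul_neg_of_neg_of_pos (sub_neg.2 hlt) (sub_pos.2 (hf hu hv hlt))
  · exact mul_neg_of_pos_of_neg (sub_pos.2 hgt) (sub_neg.2 (hf hv hu hgt))

theorem eq_of_periodic_of_strictAntiOn {f φ x y : ℝ → ℝ} {s : Set ℝ} {p : ℝ} (hp : 0 < p)
    (hf : StrictAntiOn f s) (hx : ∀ t, HasDerivAt x (f (x t) + φ t) t)
    (hy : ∀ t, HasDerivAt y (f (y t) + φ t) t) (hxp : Periodic x p) (hyp : Periodic y p)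
    (hxs : ∀ t, x t ∈ s) (hys : ∀ t, y t ∈ s) : x = y := by
  set V : ℝ → ℝ := fun t => (x t - y t) ^ 2
  have hV : ∀ t, HasDerivAt V (2 * ((x t - y t) * (f (x t) - f (y t)))) t := fun t => by
    refine (((hx t).sub (hy t)).pow 2).congr_deriv ?_
    simp only [Pi.sub_apply]
    ring
  have hdecr : ∀ t, 2 * ((x t - y t) * (f (x t) - f (y t))) ≤ 0 := fun t => by
    by_cases hxy : x t = y t
    · simp [hxy]
    · linarith [hf.sub_mul_sub_neg (hxs t) (hys t) hxy]
  have hVconst : V = fun _ => V 0 := funext fun t =>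
    (antitone_of_hasDerivAt_nonpos hV hdecr).eq_of_periodic
      (fun t => by simp only [V, hxp t, hyp t]) hp t 0
  funext t
  by_contra hxy
  have hzero := (hV t).unique (by rw [hVconst]; exact hasDerivAt_const t (V 0))
  linarith [hf.sub_mul_sub_neg (hxs t) (hys t) hxy]

lemma IsPeriodicSolution.hasDerivAt {f : ℝ → ℝ} {h : ℝ} {x : ℝ → ℝ}
    (hx : IsPeriodicSolution f h x) (t : ℝ) :
    HasDerivAt x (f (x t) + h * cos (2 * π * t)) t :=
  hx.2.1 t ▸ (hx.1 t).hasDerivAt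

lemma isPeriodicSolution_of_hasDerivAt {f : ℝ → ℝ} {h : ℝ} {x : ℝ → ℝ}
    (hx : ∀ t, HasDerivAt x (f (x t) + h * cos (2 * π * t)) t) (hxp : Periodic x 1) :
    IsPeriodicSolution f h x :=
  ⟨fun t => (hx t).differentiableAt, fun t => (hx t).deriv, hxp⟩

theorem small_h_uniqueness_general (f : ℝ → ℝ) (hf : ContDiff ℝ 1 f)
    (a b : ℝ) (hab : a < b)
    (hder : ∀ x ∈ Set.Ioo a b, deriv f x < 0)
    (h : ℝ) (hh0 : 0 ≤ h) (hh : h < min (f a) (-f b)) :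
    (∃ x : ℝ → ℝ, IsPeriodicSolution f h x ∧ ∀ t, a ≤ x t ∧ x t ≤ b) ∧
    (∀ x y : ℝ → ℝ,
      IsPeriodicSolution f h x → (∀ t, a ≤ x t ∧ x t ≤ b) →
      IsPeriodicSolution f h y → (∀ t, a ≤ y t ∧ y t ≤ b) → x = y) := by
  have hforcing : ∀ t, |h * cos (2 * π * t)| ≤ h := fun t => by
    rw [abs_mul, abs_of_nonneg hh0]
    exact mul_le_of_le_one_right hh0 (abs_cos_le_one _)
  have hanti : StrictAntiOn f (Icc a b) :=
    strictAntiOn_of_deriv_neg (convex_Icc a b) hf.continuous.continuousOn (by rwa [interior_Icc])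
  obtain ⟨K, hK⟩ := hf.locallyLipschitz.locallyLipschitzOn.exists_lipschitzOnWith_of_compact
    (isCompact_Icc (a := a) (b := b))
  refine ⟨?_, fun x y hx hxI hy hyI => eq_of_periodic_of_strictAntiOn one_pos hanti
    hx.hasDerivAt hy.hasDerivAt hx.2.2 hy.2.2 hxI hyI⟩
  obtain ⟨x, hx, hxp, hxI⟩ := exists_periodic_hasDerivAt_mem_Icc
    (φ := fun t => h * cos (2 * π * t)) (L := K + 1) (p := 1) hab.le hf.continuous.continuousOn
    (by fun_prop) (by positivity) (hK.monotoneOn_add_mul (by linarith))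
    (fun t => by simp [mul_add, cos_add_two_pi])
    (fun t => by linarith [(abs_le.1 (hforcing t)).1, min_le_left (f a) (-f b)])
    (fun t => by linarith [(abs_le.1 (hforcing t)).2, min_le_right (f a) (-f b)])
  exact ⟨x, isPeriodicSolution_of_hasDerivAt hx hxp, hxI⟩

theorem small_h_uniqueness (f : ℝ → ℝ) (hf : ContDiff ℝ 1 f)
    (a b : ℝ) (hab : a < b)
    (hder : ∀ x ∈ Set.Ioo a b, deriv f x < 0)
    (hfa : 0 < f a) (hfb : f b < 0)
    (h : ℝ) (hh0 : 0 ≤ h) (hh : h < min (f a) (-f b)) :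
    (∃ x : ℝ → ℝ, IsPeriodicSolution f h x ∧ ∀ t, a ≤ x t ∧ x t ≤ b) ∧
    (∀ x y : ℝ → ℝ,
      IsPeriodicSolution f h x → (∀ t, a ≤ x t ∧ x t ≤ b) →
      IsPeriodicSolution f h y → (∀ t, a ≤ y t ∧ y t ≤ b) → x = y) :=
  small_h_uniqueness_general f hf a b hab hder h hh0 hh
end

section
/- Let γ > 0, let f(x) = γx − x³, and let x_m = √(γ/3), so that f(x_m) = max_{x>0} f(x). Then for every h with 0 ≤ h < f(x_m), the equation x' = f(x) + h·cos(2πt) has exactly three 1-periodic solutions: one whose values lie in (−∞, −x_m), one whose values lie in (−x_m, x_m), and one whose values lie in (x_m, ∞). The two solutions with values outside [−x_m, x_m] are stable, i.e. satisfy ∫₀¹ f'(x(s)) ds < 0. -/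
/-!
At `±xm` the forcing cannot beat the cubic: `f xm + h cos (2πt) > 0` and
`f (-xm) + h cos (2πt) < 0` for all `t`. A periodic solution touching one of these levels would
stay on one side of it for a whole period, so the touching time would be an extremum with nonzero
derivative; hence every periodic solution lies in `(-∞, -xm)`, `(-xm, xm)` or `(xm, ∞)`. On each
of these `f` is strictly monotone, and for two periodic solutions `x`, `y` in the same region
`(x - y)²` is then monotone and periodic, hence constant, which forces `x = y`.

For existence, `[xm, M]` and `[-M, -xm]` are forward invariant for large `M`, so the time-one map
of the (truncated, globally Lipschitz) equation has a fixed point there by the intermediate value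
theorem; `[-xm, xm]` is backward invariant and the same argument applies after reversing time.
Stability holds because `f' < 0` outside `[-xm, xm]`.
-/

open Real

open Set Function Filter Topology
open scoped NNReal

section IntegralCurve

variable {E : Type*} [NormedAddCommGroup E] [NormedSpace ℝ E]

lemma IsIntegralCurve.comp_neg {x : ℝ → E} {v : ℝ → E → E} (hx : IsIntegralCurve x v) :
    IsIntegralCurve (fun t ↦ x (-t)) (fun t u ↦ -v (-t) u) := fun t ↦ by
  simpa [Function.comp_def] using (hx (-t)).scomp t (hasDerivAt_neg t)

lemma exists_isIntegralCurve_of_lipschitzWith [CompleteSpace E] {v : ℝ → E → E} {K C : ℝ≥0}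
    (hlip : ∀ t, LipschitzWith K (v t)) (hcont : ∀ u, Continuous (v · u))
    (hbdd : ∀ t u, ‖v t u‖ ≤ C) (x₀ : E) : ∃ x, x 0 = x₀ ∧ IsIntegralCurve x v := by
  have hloc (n : ℕ) : ∃ x : ℝ → E, x 0 = x₀ ∧
      ∀ t ∈ Ioo (-(n + 1 : ℝ)) (n + 1), HasDerivAt x (v t (x t)) t := by
    have hpl : IsPicardLindelof v (tmin := -(n + 1)) (tmax := n + 1)
        ⟨0, by constructor <;> linarith⟩ x₀ (C * (n + 1)) 0 C K :=
      { lipschitzOnWith := fun t _ ↦ (hlip t).lipschitzOnWith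
        continuousOn := fun u _ ↦ (hcont u).continuousOn
        norm_le := fun t _ u _ ↦ hbdd t u
        mul_max_le := by simp }
    obtain ⟨x, hx0, hx⟩ := hpl.exists_eq_forall_mem_Icc_hasDerivWithinAt₀
    exact ⟨x, hx0, fun t ht ↦ (hx t (Ioo_subset_Icc_self ht)).hasDerivAt (Icc_mem_nhds ht.1 ht.2)⟩
  choose sol hsol0 hsol using hloc
  have hagree {m n : ℕ} (hmn : m ≤ n) : EqOn (sol m) (sol n) (Ioo (-(m + 1 : ℝ)) (m + 1)) := by
    have hmn' : (m : ℝ) ≤ n := by exact_mod_cast hmn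
    have hsub : Ioo (-(m + 1 : ℝ)) (m + 1) ⊆ Ioo (-(n + 1 : ℝ)) (n + 1) :=
      Ioo_subset_Ioo (by linarith) (by linarith)
    refine ODE_solution_unique_of_mem_Ioo (s := fun _ ↦ univ) (fun t _ ↦ (hlip t).lipschitzOnWith)
      ⟨by linarith, by linarith⟩ (fun t ht ↦ ⟨hsol m t ht, trivial⟩)
      (fun t ht ↦ ⟨hsol n t (hsub ht), trivial⟩) ((hsol0 m).trans (hsol0 n).symm)
  have hmem (t : ℝ) : t ∈ Ioo (-(⌈|t|⌉₊ + 1 : ℝ)) (⌈|t|⌉₊ + 1) := by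
    have := Nat.le_ceil |t|
    constructor <;> linarith [neg_abs_le t, le_abs_self t]
  refine ⟨fun t ↦ sol ⌈|t|⌉₊ t, hsol0 _, fun t ↦ ?_⟩
  refine (hsol _ t (hmem t)).congr_of_eventuallyEq ?_
  filter_upwards [Ioo_mem_nhds (hmem t).1 (hmem t).2] with s hs
  rcases le_total ⌈|s|⌉₊ ⌈|t|⌉₊ with hle | hle
  · exact hagree hle (hmem s)
  · exact (hagree hle hs).symm

end IntegralCurve

section RealIntegralCurve

variable {v : ℝ → ℝ → ℝ} {x y : ℝ → ℝ} {T c : ℝ}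

lemma IsIntegralCurve.le_of_forall_neg (hx : IsIntegralCurve x v) (hc : ∀ t, v t c < 0)
    {a b : ℝ} (ha : x a ≤ c) (hab : a ≤ b) : x b ≤ c :=
  image_le_of_deriv_right_lt_deriv_boundary (B := fun _ ↦ c) hx.continuous.continuousOn
    (fun t _ ↦ (hx t).hasDerivWithinAt) ha (fun _ ↦ hasDerivAt_const _ c)
    (fun t _ hxt ↦ hxt ▸ hc t) ⟨hab, le_rfl⟩

lemma IsIntegralCurve.ge_of_forall_pos (hx : IsIntegralCurve x v) (hc : ∀ t, 0 < v t c)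
    {a b : ℝ} (ha : c ≤ x a) (hab : a ≤ b) : c ≤ x b :=
  image_le_of_deriv_right_lt_deriv_boundary (f := fun _ ↦ c) continuousOn_const
    (fun _ _ ↦ hasDerivWithinAt_const _ _ c) ha hx (fun t _ hxt ↦ hxt ▸ hc t) ⟨hab, le_rfl⟩

lemma IsIntegralCurve.ne_of_periodic_of_forall_pos (hx : IsIntegralCurve x v)
    (hp : Periodic x T) (hT : 0 < T) (hc : ∀ t, 0 < v t c) (t : ℝ) : x t ≠ c := by
  intro hxt
  have hmin : IsLocalMin x t := Eventually.of_forall fun s ↦ by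
    obtain ⟨r, hr, hsr⟩ := hp.exists_mem_Ico hT s t
    exact hsr ▸ hxt ▸ hx.ge_of_forall_pos hc hxt.ge hr.1
  exact (hc t).ne' (hxt ▸ hmin.hasDerivAt_eq_zero (hx t))

lemma IsIntegralCurve.ne_of_periodic_of_forall_neg (hx : IsIntegralCurve x v)
    (hp : Periodic x T) (hT : 0 < T) (hc : ∀ t, v t c < 0) (t : ℝ) : x t ≠ c := by
  intro hxt
  have hmax : IsLocalMax x t := Eventually.of_forall fun s ↦ by
    obtain ⟨r, hr, hsr⟩ := hp.exists_mem_Ico hT s t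
    exact hsr ▸ hxt ▸ hx.le_of_forall_neg hc hxt.le hr.1
  exact (hc t).ne (hxt ▸ hmax.hasDerivAt_eq_zero (hx t))

lemma Continuous.forall_lt_or_forall_gt_of_forall_ne (hx : Continuous x) (hc : ∀ t, x t ≠ c) :
    (∀ t, x t < c) ∨ (∀ t, c < x t) := by
  by_contra! ⟨⟨a, ha⟩, ⟨b, hb⟩⟩
  obtain ⟨t, ht⟩ := intermediate_value_univ₂ (a := b) (b := a) hx continuous_const hb ha
  exact hc t ht

lemma Function.Periodic.eq_zero_of_hasDerivAt_nonneg {u u' : ℝ → ℝ} (hp : Periodic u T)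
    (hT : 0 < T) (hu : ∀ t, HasDerivAt u (u' t) t) (hu' : ∀ t, 0 ≤ u' t) (t : ℝ) : u' t = 0 := by
  have hmono := monotone_of_hasDerivAt_nonneg hu hu'
  have hconst : u =ᶠ[𝓝 t] fun _ ↦ u t := by
    filter_upwards [Icc_mem_nhds (sub_lt_self t hT) (lt_add_of_pos_right t hT)] with s hs
    rcases le_total s t with hst | hts
    · exact le_antisymm (hmono hst) (hp.sub_eq t ▸ hmono hs.1)
    · exact le_antisymm (hp t ▸ hmono hs.2) (hmono hts)
  exact (hu t).unique ((hasDerivAt_const t (u t)).congr_of_eventuallyEq hconst)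

lemma StrictMonoOn.sub_mul_sub_pos {g : ℝ → ℝ} {S : Set ℝ} (hg : StrictMonoOn g S) {a b : ℝ}
    (ha : a ∈ S) (hb : b ∈ S) (hab : a ≠ b) : 0 < (a - b) * (g a - g b) := by
  rcases hab.lt_or_gt with h | h
  · exact mul_pos_of_neg_of_neg (sub_neg.2 h) (sub_neg.2 (hg ha hb h))
  · exact mul_pos (sub_pos.2 h) (sub_pos.2 (hg hb ha h))

lemma IsIntegralCurve.eq_of_periodic_of_strictMonoOn {S : Set ℝ} (hv : ∀ t, StrictMonoOn (v t) S)
    (hx : IsIntegralCurve x v) (hy : IsIntegralCurve y v) (hxp : Periodic x T)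
    (hyp : Periodic y T) (hT : 0 < T) (hxS : ∀ t, x t ∈ S) (hyS : ∀ t, y t ∈ S) : x = y := by
  set u' := fun t ↦ 2 * (x t - y t) * (v t (x t) - v t (y t))
  have hpos {t} (hne : x t ≠ y t) : 0 < u' t := by
    simpa only [u', mul_assoc] using mul_pos two_pos ((hv t).sub_mul_sub_pos (hxS t) (hyS t) hne)
  have hu (t) : HasDerivAt ((x - y) ^ 2) (u' t) t := by
    simpa [u'] using ((hx t).sub (hy t)).pow 2
  have hp : Periodic ((x - y) ^ 2) T := fun t ↦ by simp [hxp t, hyp t]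
  have hzero := hp.eq_zero_of_hasDerivAt_nonneg hT hu
    fun t ↦ by by_cases hne : x t = y t <;> [simp [u', hne]; exact (hpos hne).le]
  funext t
  by_contra hne
  exact (hpos hne).ne' (hzero t)

lemma IsIntegralCurve.eq_of_periodic_of_strictAntiOn {S : Set ℝ} (hv : ∀ t, StrictAntiOn (v t) S)
    (hx : IsIntegralCurve x v) (hy : IsIntegralCurve y v) (hxp : Periodic x T)
    (hyp : Periodic y T) (hT : 0 < T) (hxS : ∀ t, x t ∈ S) (hyS : ∀ t, y t ∈ S) : x = y := by
  have hrev := hx.comp_neg.eq_of_periodic_of_strictMonoOn (fun t ↦ (hv (-t)).neg) hy.comp_neg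
    (fun t ↦ by simp only [neg_add', hxp.sub_eq]) (fun t ↦ by simp only [neg_add', hyp.sub_eq])
    hT (fun t ↦ hxS (-t)) (fun t ↦ hyS (-t))
  funext t
  simpa using congrFun hrev (-t)

end RealIntegralCurve

section PeriodicExistence

variable {v : ℝ → ℝ → ℝ} {T lo hi : ℝ}

lemma exists_periodic_isIntegralCurve_of_lipschitzWith {K C : ℝ≥0}
    (hlip : ∀ t, LipschitzWith K (v t)) (hcont : ∀ u, Continuous (v · u))
    (hbdd : ∀ t u, ‖v t u‖ ≤ C) (hper : Periodic v T) (hT : 0 < T) (hlohi : lo ≤ hi)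
    (hlo : ∀ t, 0 < v t lo) (hhi : ∀ t, v t hi < 0) :
    ∃ x, IsIntegralCurve x v ∧ Periodic x T ∧ ∀ t, x t ∈ Icc lo hi := by
  choose sol hsol0 hsol using exists_isIntegralCurve_of_lipschitzWith hlip hcont hbdd
  have hmaps {a} (ha : a ∈ Icc lo hi) {t} (ht : 0 ≤ t) : sol a t ∈ Icc lo hi :=
    ⟨(hsol a).ge_of_forall_pos hlo (by rw [hsol0]; exact ha.1) ht,
      (hsol a).le_of_forall_neg hhi (by rw [hsol0]; exact ha.2) ht⟩
  have hpoincare : Continuous fun a ↦ sol a T := by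
    refine LipschitzWith.continuous (K := (Real.exp (K * T)).toNNReal)
      (LipschitzWith.of_dist_le_mul fun a b ↦ ?_)
    have := dist_le_of_trajectories_ODE hlip (hsol a).continuous.continuousOn
      (fun t _ ↦ (hsol a t).hasDerivWithinAt) (hsol b).continuous.continuousOn
      (fun t _ ↦ (hsol b t).hasDerivWithinAt) (by rw [hsol0, hsol0]) T ⟨hT.le, le_rfl⟩
    rw [Real.coe_toNNReal _ (Real.exp_pos _).le, mul_comm]
    simpa using this
  obtain ⟨a, ha, hfix⟩ : ∃ a ∈ Icc lo hi, sol a T - a = 0 :=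
    intermediate_value_Icc' hlohi (hpoincare.sub continuous_id).continuousOn
      ⟨sub_nonpos.2 (hmaps ⟨hlohi, le_rfl⟩ hT.le).2, sub_nonneg.2 (hmaps ⟨le_rfl, hlohi⟩ hT.le).1⟩
  have hperiodic : Periodic (sol a) T := by
    have hshift : IsIntegralCurve (sol a ∘ (· + T)) v := by
      simpa [Function.comp_def, hper _] using (hsol a).comp_add T
    refine congrFun (ODE_solution_unique_univ (s := fun _ ↦ univ) (t₀ := 0)
      (fun t ↦ (hlip t).lipschitzOnWith) (fun t ↦ ⟨hshift t, trivial⟩)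
      (fun t ↦ ⟨hsol a t, trivial⟩) ?_)
    simpa [hsol0] using sub_eq_zero.1 hfix
  refine ⟨sol a, hsol a, hperiodic, fun t ↦ ?_⟩
  obtain ⟨s, hs, hts⟩ := hperiodic.exists_mem_Ico₀ hT t
  exact hts ▸ hmaps ha hs.1

lemma exists_periodic_isIntegralCurve_mem_Icc {K : ℝ≥0} (hlohi : lo ≤ hi)
    (hlip : ∀ t, LipschitzOnWith K (v t) (Icc lo hi)) (hcont : ∀ u ∈ Icc lo hi, Continuous (v · u))
    {C : ℝ} (hbdd : ∀ t, ∀ u ∈ Icc lo hi, |v t u| ≤ C) (hper : Periodic v T) (hT : 0 < T)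
    (hlo : ∀ t, 0 < v t lo) (hhi : ∀ t, v t hi < 0) :
    ∃ x, IsIntegralCurve x v ∧ Periodic x T ∧ ∀ t, x t ∈ Icc lo hi := by
  set w : ℝ → ℝ → ℝ := fun t u ↦ v t (projIcc lo hi hlohi u)
  have hw {t u} (hu : u ∈ Icc lo hi) : w t u = v t u := by simp only [w, projIcc_of_mem hlohi hu]
  have hwlip (t : ℝ) : LipschitzWith K (w t) := by
    have := (lipschitzOnWith_iff_restrict.1 (hlip t)).comp (LipschitzWith.projIcc hlohi)
    rwa [mul_one] at this
  obtain ⟨x, hx, hxp, hxI⟩ := exists_periodic_isIntegralCurve_of_lipschitzWith (C := C.toNNReal)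
    hwlip (fun u ↦ hcont _ (projIcc lo hi hlohi u).2)
    (fun t u ↦ (hbdd t _ (projIcc lo hi hlohi u).2).trans (Real.le_coe_toNNReal C))
    (fun t ↦ by simp only [w, hper t]) hT hlohi
    (fun t ↦ hw ⟨le_rfl, hlohi⟩ ▸ hlo t) (fun t ↦ hw ⟨hlohi, le_rfl⟩ ▸ hhi t)
  exact ⟨x, fun t ↦ hw (hxI t) ▸ hx t, hxp, hxI⟩

lemma exists_periodic_isIntegralCurve_mem_Icc_of_repelling {K : ℝ≥0} (hlohi : lo ≤ hi)
    (hlip : ∀ t, LipschitzOnWith K (v t) (Icc lo hi)) (hcont : ∀ u ∈ Icc lo hi, Continuous (v · u))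
    {C : ℝ} (hbdd : ∀ t, ∀ u ∈ Icc lo hi, |v t u| ≤ C) (hper : Periodic v T) (hT : 0 < T)
    (hlo : ∀ t, v t lo < 0) (hhi : ∀ t, 0 < v t hi) :
    ∃ x, IsIntegralCurve x v ∧ Periodic x T ∧ ∀ t, x t ∈ Icc lo hi := by
  obtain ⟨x, hx, hxp, hxI⟩ := exists_periodic_isIntegralCurve_mem_Icc (v := fun t u ↦ -v (-t) u)
    hlohi (fun t ↦ (hlip (-t)).neg) (fun u hu ↦ ((hcont u hu).comp continuous_neg).neg)
    (fun t u hu ↦ (abs_neg (v (-t) u)).trans_le (hbdd (-t) u hu))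
    (fun t ↦ by simp only [neg_add', hper.sub_eq]) hT
    (fun t ↦ neg_pos.2 (hlo (-t))) (fun t ↦ neg_lt_zero.2 (hhi (-t)))
  refine ⟨fun t ↦ x (-t), by simpa using hx.comp_neg, fun t ↦ ?_, fun t ↦ hxI (-t)⟩
  simp only [neg_add', hxp.sub_eq]

end PeriodicExistence

section ForcedEquation

variable {f : ℝ → ℝ} {h : ℝ} {x y : ℝ → ℝ}

noncomputable def forcedField (f : ℝ → ℝ) (h t u : ℝ) : ℝ := f u + h * cos (2 * π * t)

lemma isPeriodicSolution_iff :
    IsPeriodicSolution f h x ↔ IsIntegralCurve x (forcedField f h) ∧ Periodic x 1 := by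
  refine ⟨fun ⟨hd, hx, hp⟩ ↦ ⟨fun t ↦ ?_, hp⟩, fun ⟨hx, hp⟩ ↦ ?_⟩
  · rw [forcedField, ← hx t]
    exact (hd t).hasDerivAt
  · exact ⟨fun t ↦ (hx t).differentiableAt, fun t ↦ (hx t).deriv, hp⟩

lemma periodic_forcedField : Periodic (forcedField f h) 1 := fun t ↦ by
  ext u
  simp [forcedField, mul_add, cos_add_two_pi]

lemma continuous_forcedField (u : ℝ) : Continuous (forcedField f h · u) := by
  unfold forcedField
  fun_prop

lemma abs_forcedField_sub_le (t u : ℝ) : |forcedField f h t u - f u| ≤ |h| := by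
  simpa [forcedField, abs_mul] using mul_le_of_le_one_right (abs_nonneg h) (abs_cos_le_one _)

lemma exists_lipschitzOnWith_forcedField (hf : LocallyLipschitz f) (s : Set ℝ) (hs : IsCompact s) :
    ∃ K, ∀ t, LipschitzOnWith K (forcedField f h t) s := by
  obtain ⟨K, hK⟩ := hf.locallyLipschitzOn.exists_lipschitzOnWith_of_compact hs
  refine ⟨K, fun t ↦ ?_⟩
  have := hK.add (LipschitzWith.const (h * cos (2 * π * t))).lipschitzOnWith
  rwa [add_zero] at this

lemma exists_abs_forcedField_le (hf : Continuous f) (s : Set ℝ) (hs : IsCompact s) :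
    ∃ C, ∀ t, ∀ u ∈ s, |forcedField f h t u| ≤ C := by
  obtain ⟨C, hC⟩ := hs.exists_bound_of_continuousOn hf.continuousOn
  refine ⟨C + |h|, fun t u hu ↦ ?_⟩
  have := abs_sub_abs_le_abs_sub (forcedField f h t u) (f u)
  linarith [hC u hu, abs_forcedField_sub_le (f := f) (h := h) t u, Real.norm_eq_abs (f u)]

variable {lo hi c : ℝ}

lemma forcedField_pos_of_abs_lt (hc : |h| < f c) {t : ℝ} : 0 < forcedField f h t c := by
  linarith [abs_le.1 (abs_forcedField_sub_le (f := f) (h := h) t c)]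

lemma forcedField_neg_of_lt_neg_abs (hc : f c < -|h|) {t : ℝ} : forcedField f h t c < 0 := by
  linarith [abs_le.1 (abs_forcedField_sub_le (f := f) (h := h) t c)]

lemma exists_isPeriodicSolution_mem_Icc (hf : LocallyLipschitz f) (hlohi : lo ≤ hi)
    (hlo : |h| < f lo) (hhi : f hi < -|h|) :
    ∃ x, IsPeriodicSolution f h x ∧ ∀ t, x t ∈ Icc lo hi := by
  obtain ⟨K, hK⟩ := exists_lipschitzOnWith_forcedField (h := h) hf _ isCompact_Icc
  obtain ⟨C, hC⟩ := exists_abs_forcedField_le (h := h) hf.continuous _ isCompact_Icc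
  obtain ⟨x, hx, hxp, hxI⟩ := exists_periodic_isIntegralCurve_mem_Icc hlohi hK
    (fun u _ ↦ continuous_forcedField u) hC periodic_forcedField one_pos
    (fun _ ↦ forcedField_pos_of_abs_lt hlo) (fun _ ↦ forcedField_neg_of_lt_neg_abs hhi)
  exact ⟨x, isPeriodicSolution_iff.2 ⟨hx, hxp⟩, hxI⟩

lemma exists_isPeriodicSolution_mem_Icc_of_repelling (hf : LocallyLipschitz f) (hlohi : lo ≤ hi)
    (hlo : f lo < -|h|) (hhi : |h| < f hi) :
    ∃ x, IsPeriodicSolution f h x ∧ ∀ t, x t ∈ Icc lo hi := by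
  obtain ⟨K, hK⟩ := exists_lipschitzOnWith_forcedField (h := h) hf _ isCompact_Icc
  obtain ⟨C, hC⟩ := exists_abs_forcedField_le (h := h) hf.continuous _ isCompact_Icc
  obtain ⟨x, hx, hxp, hxI⟩ := exists_periodic_isIntegralCurve_mem_Icc_of_repelling hlohi hK
    (fun u _ ↦ continuous_forcedField u) hC periodic_forcedField one_pos
    (fun _ ↦ forcedField_neg_of_lt_neg_abs hlo) (fun _ ↦ forcedField_pos_of_abs_lt hhi)
  exact ⟨x, isPeriodicSolution_iff.2 ⟨hx, hxp⟩, hxI⟩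

namespace IsPeriodicSolution

lemma ne_of_abs_lt (hx : IsPeriodicSolution f h x) (hc : |h| < f c) (t : ℝ) : x t ≠ c := by
  obtain ⟨hx, hxp⟩ := isPeriodicSolution_iff.1 hx
  exact hx.ne_of_periodic_of_forall_pos hxp one_pos (fun _ ↦ forcedField_pos_of_abs_lt hc) t

lemma ne_of_lt_neg_abs (hx : IsPeriodicSolution f h x) (hc : f c < -|h|) (t : ℝ) : x t ≠ c := by
  obtain ⟨hx, hxp⟩ := isPeriodicSolution_iff.1 hx
  exact hx.ne_of_periodic_of_forall_neg hxp one_pos (fun _ ↦ forcedField_neg_of_lt_neg_abs hc) t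

lemma trichotomy (hx : IsPeriodicSolution f h x) (hlo : f lo < -|h|) (hhi : |h| < f hi) :
    (∀ t, x t < lo) ∨ (∀ t, lo < x t ∧ x t < hi) ∨ (∀ t, hi < x t) := by
  have hcont := hx.1.continuous
  rcases hcont.forall_lt_or_forall_gt_of_forall_ne (hx.ne_of_lt_neg_abs hlo) with hl | hl
  · exact .inl hl
  rcases hcont.forall_lt_or_forall_gt_of_forall_ne (hx.ne_of_abs_lt hhi) with hh | hh
  · exact .inr (.inl fun t ↦ ⟨hl t, hh t⟩)
  · exact .inr (.inr hh)

lemma eq_of_strictMonoOn {S : Set ℝ} (hf : StrictMonoOn f S) (hx : IsPeriodicSolution f h x)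
    (hy : IsPeriodicSolution f h y) (hxS : ∀ t, x t ∈ S) (hyS : ∀ t, y t ∈ S) : x = y := by
  obtain ⟨hx, hxp⟩ := isPeriodicSolution_iff.1 hx
  obtain ⟨hy, hyp⟩ := isPeriodicSolution_iff.1 hy
  exact hx.eq_of_periodic_of_strictMonoOn (fun t ↦ hf.add_const _) hy hxp hyp one_pos hxS hyS

lemma eq_of_strictAntiOn {S : Set ℝ} (hf : StrictAntiOn f S) (hx : IsPeriodicSolution f h x)
    (hy : IsPeriodicSolution f h y) (hxS : ∀ t, x t ∈ S) (hyS : ∀ t, y t ∈ S) : x = y := by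
  obtain ⟨hx, hxp⟩ := isPeriodicSolution_iff.1 hx
  obtain ⟨hy, hyp⟩ := isPeriodicSolution_iff.1 hy
  exact hx.eq_of_periodic_of_strictAntiOn (fun t ↦ hf.add_const _) hy hxp hyp one_pos hxS hyS

end IsPeriodicSolution

end ForcedEquation

section Cubic

variable {γ : ℝ}

def cubic (γ u : ℝ) : ℝ := γ * u - u ^ 3

lemma cubic_neg (u : ℝ) : cubic γ (-u) = -cubic γ u := by
  simp only [cubic]
  ring

lemma deriv_cubic (u : ℝ) : deriv (cubic γ) u = γ - 3 * u ^ 2 := by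
  have : HasDerivAt (cubic γ) _ u := ((hasDerivAt_id u).const_mul γ).sub (hasDerivAt_pow 3 u)
  simp [this.deriv]

lemma locallyLipschitz_cubic : LocallyLipschitz (cubic γ) :=
  ContDiff.locallyLipschitz (𝕂 := ℝ) (by unfold cubic; fun_prop)

lemma deriv_cubic_pos {u : ℝ} (hu : |u| < √(γ / 3)) : 0 < deriv (cubic γ) u := by
  have := (lt_sqrt (abs_nonneg u)).1 hu
  rw [sq_abs] at this
  rw [deriv_cubic]
  linarith

lemma deriv_cubic_neg {u : ℝ} (hu : √(γ / 3) < |u|) : deriv (cubic γ) u < 0 := by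
  have := (sqrt_lt' ((sqrt_nonneg _).trans_lt hu)).1 hu
  rw [sq_abs] at this
  rw [deriv_cubic]
  linarith

lemma strictMonoOn_cubic : StrictMonoOn (cubic γ) (Icc (-√(γ / 3)) √(γ / 3)) :=
  strictMonoOn_of_deriv_pos (convex_Icc _ _) locallyLipschitz_cubic.continuous.continuousOn fun u hu ↦
    deriv_cubic_pos (abs_lt.2 (by simpa using hu))

lemma strictAntiOn_cubic_Ici : StrictAntiOn (cubic γ) (Ici √(γ / 3)) :=
  strictAntiOn_of_deriv_neg (convex_Ici _) locallyLipschitz_cubic.continuous.continuousOn fun u hu ↦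
    deriv_cubic_neg ((by simpa using hu : √(γ / 3) < u).trans_le (le_abs_self u))

lemma strictAntiOn_cubic_Iic : StrictAntiOn (cubic γ) (Iic (-√(γ / 3))) :=
  strictAntiOn_of_deriv_neg (convex_Iic _) locallyLipschitz_cubic.continuous.continuousOn fun u hu ↦
    deriv_cubic_neg (by rw [interior_Iic, mem_Iio] at hu; linarith [neg_le_abs u])

lemma exists_cubic_lt (γ a c : ℝ) : ∃ M, a ≤ M ∧ cubic γ M < c := by
  set M := max (max a 1) (γ + |c| + 1)
  have h1 : 1 ≤ M := le_max_of_le_left (le_max_right _ _)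
  have h2 : γ + |c| + 1 ≤ M := le_max_right _ _
  have hM : cubic γ M = M * (γ - M ^ 2) := by simp only [cubic]; ring
  refine ⟨M, le_max_of_le_left (le_max_left _ _), ?_⟩
  nlinarith [neg_abs_le c, abs_nonneg c]

lemma integral_deriv_cubic_neg {x : ℝ → ℝ} (hx : Continuous x) (hlt : ∀ s, √(γ / 3) < |x s|) :
    ∫ s in (0 : ℝ)..1, deriv (cubic γ) (x s) < 0 := by
  have hcont : Continuous fun s ↦ -deriv (cubic γ) (x s) := by
    simp only [deriv_cubic]
    fun_prop
  have := intervalIntegral.intervalIntegral_pos_of_pos (hcont.intervalIntegrable 0 1)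
    (fun s ↦ neg_pos.2 (deriv_cubic_neg (hlt s))) one_pos
  rwa [intervalIntegral.integral_neg, neg_pos] at this

end Cubic

theorem three_solutions_cubic_general (γ : ℝ)
    (f : ℝ → ℝ) (hf : ∀ x, f x = γ * x - x ^ 3)
    (xm : ℝ) (hxm : xm = Real.sqrt (γ / 3))
    (h : ℝ) (hh0 : 0 ≤ h) (hh : h < f xm) :
    ∃ x₁ x₂ x₃ : ℝ → ℝ,
      IsPeriodicSolution f h x₁ ∧ IsPeriodicSolution f h x₂ ∧
      IsPeriodicSolution f h x₃ ∧
      (∀ t, x₁ t < -xm) ∧ (∀ t, -xm < x₂ t ∧ x₂ t < xm) ∧ (∀ t, xm < x₃ t) ∧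
      (∫ s in (0:ℝ)..1, deriv f (x₁ s)) < 0 ∧
      (∫ s in (0:ℝ)..1, deriv f (x₃ s)) < 0 ∧
      ∀ y : ℝ → ℝ, IsPeriodicSolution f h y → y = x₁ ∨ y = x₂ ∨ y = x₃ := by
  obtain rfl : f = cubic γ := funext hf
  subst hxm
  replace hh : |h| < cubic γ √(γ / 3) := by rwa [abs_of_nonneg hh0]
  have hneg : cubic γ (-√(γ / 3)) < -|h| := by rw [cubic_neg]; linarith
  obtain ⟨M, hM, hMh⟩ := exists_cubic_lt γ (√(γ / 3)) (-|h|)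
  have hMneg : |h| < cubic γ (-M) := by rw [cubic_neg]; linarith
  obtain ⟨x₁, hx₁, hx₁I⟩ :=
    exists_isPeriodicSolution_mem_Icc locallyLipschitz_cubic (neg_le_neg hM) hMneg hneg
  obtain ⟨x₂, hx₂, hx₂I⟩ := exists_isPeriodicSolution_mem_Icc_of_repelling locallyLipschitz_cubic
    (neg_le_self (sqrt_nonneg _)) hneg hh
  obtain ⟨x₃, hx₃, hx₃I⟩ := exists_isPeriodicSolution_mem_Icc locallyLipschitz_cubic hM hh hMh
  have hx₁lt t : x₁ t < -√(γ / 3) := (hx₁I t).2.lt_of_ne (hx₁.ne_of_lt_neg_abs hneg t)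
  have hx₂mem t : -√(γ / 3) < x₂ t ∧ x₂ t < √(γ / 3) :=
    ⟨(hx₂I t).1.lt_of_ne' (hx₂.ne_of_lt_neg_abs hneg t),
      (hx₂I t).2.lt_of_ne (hx₂.ne_of_abs_lt hh t)⟩
  have hx₃gt t : √(γ / 3) < x₃ t := (hx₃I t).1.lt_of_ne' (hx₃.ne_of_abs_lt hh t)
  refine ⟨x₁, x₂, x₃, hx₁, hx₂, hx₃, hx₁lt, hx₂mem, hx₃gt,
    integral_deriv_cubic_neg hx₁.1.continuous fun s ↦ lt_abs.2 (.inr (by linarith [hx₁lt s])),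
    integral_deriv_cubic_neg hx₃.1.continuous fun s ↦ lt_abs.2 (.inl (hx₃gt s)), fun y hy ↦ ?_⟩
  rcases hy.trichotomy hneg hh with hy' | hy' | hy'
  · exact .inl (hy.eq_of_strictAntiOn strictAntiOn_cubic_Iic hx₁ (fun t ↦ (hy' t).le)
      fun t ↦ (hx₁lt t).le)
  · exact .inr (.inl (hy.eq_of_strictMonoOn strictMonoOn_cubic hx₂
      (fun t ↦ ⟨(hy' t).1.le, (hy' t).2.le⟩) hx₂I))
  · exact .inr (.inr (hy.eq_of_strictAntiOn strictAntiOn_cubic_Ici hx₃ (fun t ↦ (hy' t).le)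
      fun t ↦ (hx₃gt t).le))

theorem three_solutions_cubic (γ : ℝ) (hγ : 0 < γ)
    (f : ℝ → ℝ) (hf : ∀ x, f x = γ * x - x ^ 3)
    (xm : ℝ) (hxm : xm = Real.sqrt (γ / 3))
    (h : ℝ) (hh0 : 0 ≤ h) (hh : h < f xm) :
    ∃ x₁ x₂ x₃ : ℝ → ℝ,
      IsPeriodicSolution f h x₁ ∧ IsPeriodicSolution f h x₂ ∧
      IsPeriodicSolution f h x₃ ∧
      (∀ t, x₁ t < -xm) ∧ (∀ t, -xm < x₂ t ∧ x₂ t < xm) ∧ (∀ t, xm < x₃ t) ∧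
      (∫ s in (0:ℝ)..1, deriv f (x₁ s)) < 0 ∧
      (∫ s in (0:ℝ)..1, deriv f (x₃ s)) < 0 ∧
      ∀ y : ℝ → ℝ, IsPeriodicSolution f h y → y = x₁ ∨ y = x₂ ∨ y = x₃ :=
  three_solutions_cubic_general γ f hf xm hxm h hh0 hh
end

section
/- Let β > 1, let f(x) = tanh(βx) − x, and let x_m > 0 be the unique positive point at which f attains its maximum over (0,∞). Then for every h with 0 ≤ h < f(x_m), the equation x' = f(x) + h·cos(2πt) has exactly three 1-periodic solutions: one whose values lie in (−∞, −x_m), one whose values lie in (−x_m, x_m), and one whose values lie in (x_m, ∞). The two solutions with values outside [−x_m, x_m] are stable, i.e. satisfy ∫₀¹ f'(x(s)) ds < 0. -/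
/-!
For `0 ≤ h < f xm` the forced field `f x + h cos 2πt` points upward at `x = xm` and downward at
`x = -xm` for every `t`, since `f` is odd; because `tanh < 1` the same holds, reversed, at `±R` for
`R` large. Hence `[-R, -xm]` and `[xm, R]` are forward invariant and `[-xm, xm]` is backward
invariant, and the intermediate value theorem gives a fixed point of the time-one map in each strip,
i.e. a periodic solution. A periodic solution can never meet `±xm`, as it would have to cross that
level twice in the same direction; so it stays in one of the three regions, on each of which `f` is
injective. For two periodic solutions `y`, `z` there, Rolle's theorem gives a time at which
`(z - y)' = f z - f y` vanishes, so `y` and `z` meet and coincide by uniqueness for the ODE.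
Stability holds because `f' < 0` on `|x| > xm`, where `f'(xm) = 0`.
-/

open Real

open Set Filter Function Metric
open scoped NNReal

namespace Real

theorem hasDerivAt_tanh (x : ℝ) : HasDerivAt tanh (1 - tanh x ^ 2) x := by
  have h := (hasDerivAt_sinh x).div (hasDerivAt_cosh x) (cosh_pos x).ne'
  rw [show sinh / cosh = tanh from funext fun y => (tanh_eq_sinh_div_cosh y).symm] at h
  refine h.congr_deriv ?_
  rw [tanh_eq_sinh_div_cosh, div_pow, one_sub_div (pow_ne_zero 2 (cosh_pos x).ne')]
  ring

theorem continuous_tanh : Continuous tanh :=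
  continuous_iff_continuousAt.2 fun x => (hasDerivAt_tanh x).continuousAt

theorem tanh_strictMono : StrictMono tanh :=
  strictMono_of_deriv_pos fun x => by
    rw [(hasDerivAt_tanh x).deriv]
    linarith [tanh_sq_lt_one x]

theorem abs_tanh (x : ℝ) : |tanh x| = tanh |x| := by
  rw [tanh_eq_sinh_div_cosh, tanh_eq_sinh_div_cosh, abs_div, abs_sinh, cosh_abs,
    abs_of_pos (cosh_pos x)]

theorem tanh_sq_lt_tanh_sq {x y : ℝ} (h : |x| < |y|) : tanh x ^ 2 < tanh y ^ 2 := by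
  rw [← sq_abs, ← sq_abs (tanh y), abs_tanh, abs_tanh]
  refine pow_lt_pow_left₀ (tanh_strictMono h) ?_ two_ne_zero
  simpa [tanh_zero] using tanh_strictMono.monotone (abs_nonneg x)

end Real

theorem mem_Icc_of_hasDerivWithinAt_of_inward {y y' : ℝ → ℝ} {t₀ t₁ a b : ℝ}
    (hy : ContinuousOn y (Icc t₀ t₁))
    (hy' : ∀ t ∈ Ico t₀ t₁, HasDerivWithinAt y (y' t) (Ici t) t) (h₀ : y t₀ ∈ Icc a b)
    (ha : ∀ t ∈ Ico t₀ t₁, y t = a → 0 < y' t) (hb : ∀ t ∈ Ico t₀ t₁, y t = b → y' t < 0)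
    {t : ℝ} (ht : t ∈ Icc t₀ t₁) : y t ∈ Icc a b :=
  ⟨image_le_of_deriv_right_lt_deriv_boundary' continuousOn_const
      (fun _ _ => hasDerivWithinAt_const _ _ _) h₀.1 hy hy'
      (fun t ht hyt => ha t ht hyt.symm) ht,
    image_le_of_deriv_right_lt_deriv_boundary' hy hy' h₀.2 continuousOn_const
      (fun _ _ => hasDerivWithinAt_const _ _ _) hb ht⟩

namespace Function.Periodic

theorem ne_of_hasDerivAt_pos {y y' : ℝ → ℝ} {p c : ℝ} (hy : Periodic y p) (hp : 0 < p)
    (hy' : ∀ t, HasDerivAt y (y' t) t) (hc : ∀ t, y t = c → 0 < y' t) (t : ℝ) : y t ≠ c := by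
  intro hyt
  have hle : ∀ s ∈ Icc t (t + p), c ≤ y s := fun s hs =>
    image_le_of_deriv_right_lt_deriv_boundary' continuousOn_const
      (fun _ _ => hasDerivWithinAt_const _ _ _) hyt.ge
      (HasDerivAt.continuousOn fun s _ => hy' s) (fun s _ => (hy' s).hasDerivWithinAt)
      (fun s _ hys => hc s hys.symm) hs
  have hmin : IsLocalMin y t := Eventually.of_forall fun s => by
    obtain ⟨s', hs', hys⟩ := hy.exists_mem_Ico hp s t
    rw [hyt, hys]
    exact hle s' (Ico_subset_Icc_self hs')
  exact (hc t hyt).ne' (hmin.hasDerivAt_eq_zero (hy' t))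

theorem ne_of_hasDerivAt_neg {y y' : ℝ → ℝ} {p c : ℝ} (hy : Periodic y p) (hp : 0 < p)
    (hy' : ∀ t, HasDerivAt y (y' t) t) (hc : ∀ t, y t = c → y' t < 0) (t : ℝ) : y t ≠ c := by
  have := (hy.comp Neg.neg).ne_of_hasDerivAt_pos hp (fun t => (hy' t).neg) (c := -c)
    (fun t ht => neg_pos.2 (hc t (neg_inj.1 ht))) t
  exact fun h => this (congrArg Neg.neg h)

end Function.Periodic

section Connected

variable {X α : Type*} [TopologicalSpace X] [PreconnectedSpace X] [LinearOrder α]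
  [TopologicalSpace α] [OrderClosedTopology α] {y : X → α}

theorem Continuous.lt_of_forall_ne (hy : Continuous y) {c : α} (hc : ∀ t, y t ≠ c) {s : X}
    (hs : y s < c) (t : X) : y t < c := by
  by_contra! h
  obtain ⟨r, hr⟩ := intermediate_value_univ s t hy ⟨hs.le, h⟩
  exact hc r hr

theorem Continuous.gt_of_forall_ne (hy : Continuous y) {c : α} (hc : ∀ t, y t ≠ c) {s : X}
    (hs : c < y s) (t : X) : c < y t :=
  Continuous.lt_of_forall_ne (α := αᵒᵈ) hy hc hs t

theorem Continuous.trichotomy_of_forall_ne (hy : Continuous y) {a b : α} (ha : ∀ t, y t ≠ a)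
    (hb : ∀ t, y t ≠ b) (s : X) :
    (∀ t, y t < a) ∨ (∀ t, y t ∈ Ioo a b) ∨ (∀ t, b < y t) := by
  rcases (ha s).lt_or_gt with hs | has
  · exact .inl (hy.lt_of_forall_ne ha hs)
  rcases (hb s).lt_or_gt with hbs | hbs
  · exact .inr <| .inl fun t => ⟨hy.gt_of_forall_ne ha has t, hy.lt_of_forall_ne hb hbs t⟩
  · exact .inr <| .inr (hy.gt_of_forall_ne hb hbs)

end Connected

theorem IsIntegralCurve.eq_of_injOn {v : ℝ → ℝ → ℝ} {K : ℝ≥0} (hv : ∀ t, LipschitzWith K (v t))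
    {s : Set ℝ} (hinj : ∀ t, InjOn (v t) s) {p : ℝ} (hp : 0 < p) {y z : ℝ → ℝ}
    (hy : IsIntegralCurve y v) (hz : IsIntegralCurve z v) (hyp : Periodic y p)
    (hzp : Periodic z p) (hys : ∀ t, y t ∈ s) (hzs : ∀ t, z t ∈ s) : y = z := by
  by_contra hne
  have hne' : ∀ t, y t ≠ z t := fun t h => hne <|
    ODE_solution_unique_univ (fun t => (hv t).lipschitzOnWith (s := univ))
      (fun t => ⟨hy t, mem_univ _⟩) (fun t => ⟨hz t, mem_univ _⟩) h
  obtain ⟨c, -, hc⟩ := exists_hasDerivAt_eq_zero hp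
    (HasDerivAt.continuousOn fun t _ => (hz t).sub (hy t))
    (hzp.sub hyp).eq.symm fun t _ => (hz t).sub (hy t)
  exact hne' c (hinj c (hys c) (hzs c) (sub_eq_zero.1 hc).symm)

section Flow

variable {E : Type*} [NormedAddCommGroup E] [NormedSpace ℝ E]

theorem exists_flow_of_norm_le [CompleteSpace E] {v : ℝ → E → E} {K : ℝ≥0} {L : ℝ}
    (hv : ∀ t, LipschitzWith K (v t)) (hvt : ∀ x, Continuous (v · x)) (hL : ∀ t x, ‖v t x‖ ≤ L)
    {tmin tmax t₀ : ℝ} (ht₀ : t₀ ∈ Icc tmin tmax) (x₀ : E) (r : ℝ≥0) :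
    ∃ α : E → ℝ → E, (∀ x ∈ closedBall x₀ r, α x t₀ = x ∧
      IsIntegralCurveOn (α x) v (Icc tmin tmax)) ∧
      ∃ L' : ℝ≥0, ∀ t ∈ Icc tmin tmax, LipschitzOnWith L' (α · t) (closedBall x₀ r) :=
  IsPicardLindelof.exists_forall_mem_closedBall_eq_hasDerivWithinAt_lipschitzOnWith
    (t₀ := ⟨t₀, ht₀⟩) (a := r + L.toNNReal * (tmax - tmin).toNNReal)
    { lipschitzOnWith := fun t _ => (hv t).lipschitzOnWith
      continuousOn := fun x _ => (hvt x).continuousOn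
      norm_le := fun t _ x _ => (hL t x).trans (le_coe_toNNReal L)
      mul_max_le := by
        rw [NNReal.coe_add, add_sub_cancel_left, NNReal.coe_mul]
        gcongr
        exact (max_le (by linarith [ht₀.1]) (by linarith [ht₀.2])).trans (le_coe_toNNReal _) }

theorem IsIntegralCurveOn.isIntegralCurve_comp_fract {v : ℝ → E → E} {K : ℝ≥0}
    (hv : ∀ t, LipschitzWith K (v t)) (hvp : Periodic v 1) {Y : ℝ → E}
    (hY : IsIntegralCurveOn Y v (Ioo (-1) 2)) (h01 : Y 1 = Y 0) :
    IsIntegralCurve (Y ∘ Int.fract) v := by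
  have hY' : ∀ t ∈ Ioo (-1 : ℝ) 2, HasDerivAt Y (v t (Y t)) t := fun t ht =>
    (hY t ht).hasDerivAt (Ioo_mem_nhds ht.1 ht.2)
  -- `Y (· + 1)` solves the same equation because `v` is 1-periodic in time
  have hshift : EqOn (fun u => Y (u + 1)) Y (Ioo (-1) 1) := by
    refine ODE_solution_unique_of_mem_Ioo (s := fun _ => univ)
      (fun t _ => (hv t).lipschitzOnWith) (t₀ := 0) ⟨by norm_num, by norm_num⟩
      (fun t ht => ⟨?_, mem_univ _⟩)
      (fun t ht => ⟨hY' t ⟨ht.1, by linarith [ht.2]⟩, mem_univ _⟩) (by simpa using h01)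
    simpa only [hvp t] using
      (hY' (t + 1) ⟨by linarith [ht.1], by linarith [ht.2]⟩).comp_add_const t 1
  have hlocal : ∀ n : ℤ, ∀ s ∈ Ioo ((n : ℝ) - 1) (n + 1), Y (Int.fract s) = Y (s - n) := by
    intro n s hs
    rcases le_or_gt (n : ℝ) s with h | h
    · rw [← Int.self_sub_floor, Int.floor_eq_iff.2 ⟨h, hs.2⟩]
    · rw [← Int.self_sub_floor, (Int.floor_eq_iff (z := n - 1)).2 ⟨by push_cast; linarith [hs.1],
        by push_cast; linarith⟩]
      push_cast
      rw [show s - (n - 1) = s - n + 1 by ring]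
      exact hshift ⟨by linarith [hs.1], by linarith⟩
  intro t
  have hn := abs_le.1 (abs_sub_round t)
  have hnt : t ∈ Ioo ((round t : ℝ) - 1) (round t + 1) := ⟨by linarith, by linarith⟩
  have hd := (hY' (t - round t) ⟨by linarith, by linarith⟩).comp_sub_const t (round t)
  rw [(by simpa using hvp.sub_int_mul_eq (round t) : v (t - round t) = v t),
    ← hlocal _ t hnt] at hd
  exact hd.congr_of_eventuallyEq <| eventually_of_mem (Ioo_mem_nhds hnt.1 hnt.2) (hlocal _)

end Flow

theorem exists_periodic_isIntegralCurve_mem_Icc_of_norm_le {w : ℝ → ℝ → ℝ} {K : ℝ≥0} {L : ℝ}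
    (hw : ∀ t, LipschitzWith K (w t)) (hwt : ∀ x, Continuous (w · x)) (hL : ∀ t x, ‖w t x‖ ≤ L)
    (hwp : Periodic w 1) {a b : ℝ} (hab : a ≤ b) (ha : ∀ t, 0 < w t a) (hb : ∀ t, w t b < 0) :
    ∃ x, IsIntegralCurve x w ∧ Periodic x 1 ∧ ∀ t, x t ∈ Icc a b := by
  obtain ⟨α, hα, L', hαL⟩ := exists_flow_of_norm_le hw hwt hL (tmin := -1) (tmax := 2)
    (t₀ := 0) ⟨by norm_num, by norm_num⟩ 0 (‖a‖₊ + ‖b‖₊)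
  have hball : Icc a b ⊆ closedBall 0 (‖a‖₊ + ‖b‖₊) := fun x hx => by
    simp only [mem_closedBall_zero_iff, coe_nnnorm, Real.norm_eq_abs, abs_le]
    constructor <;> linarith [hx.1, hx.2, neg_abs_le a, le_abs_self b, abs_nonneg a, abs_nonneg b]
  have hinv : ∀ x ∈ Icc a b, ∀ t ∈ Icc (0 : ℝ) 1, α x t ∈ Icc a b := by
    intro x hx t ht
    obtain ⟨h0, hx'⟩ := hα x (hball hx)
    have hderiv : ∀ s ∈ Icc (0 : ℝ) 1, HasDerivAt (α x) (w s (α x s)) s := fun s hs =>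
      (hx' s ⟨by linarith [hs.1], by linarith [hs.2]⟩).hasDerivAt
        (Icc_mem_nhds (by linarith [hs.1]) (by linarith [hs.2]))
    exact mem_Icc_of_hasDerivWithinAt_of_inward (HasDerivAt.continuousOn hderiv)
      (fun s hs => (hderiv s (Ico_subset_Icc_self hs)).hasDerivWithinAt) (by rwa [h0])
      (fun s _ hs => hs ▸ ha s) (fun s _ hs => hs ▸ hb s) ht
  -- a fixed point of the time-one map is the initial value of a periodic solution
  obtain ⟨x₀, hx₀, hfix⟩ := exists_mem_Icc_isFixedPt_of_mapsTo (f := (α · 1))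
    ((hαL 1 ⟨by norm_num, by norm_num⟩).continuousOn.mono hball) hab
    (fun x hx => hinv x hx 1 ⟨zero_le_one, le_rfl⟩)
  obtain ⟨h0, hx₀'⟩ := hα x₀ (hball hx₀)
  exact ⟨α x₀ ∘ Int.fract,
    (hx₀'.mono Ioo_subset_Icc_self).isIntegralCurve_comp_fract hw hwp (hfix.trans h0.symm),
    fun t => by simp only [comp_apply, Int.fract_add_one],
    fun t => hinv x₀ hx₀ _ ⟨Int.fract_nonneg t, (Int.fract_lt_one t).le⟩⟩

theorem exists_periodic_isIntegralCurve_mem_Icc_s4 {g k : ℝ → ℝ} {K : ℝ≥0}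
    (hg : LipschitzWith K g) (hk : Continuous k) (hkp : Periodic k 1) {a b : ℝ} (hab : a ≤ b)
    (ha : ∀ t, 0 < g a + k t) (hb : ∀ t, g b + k t < 0) :
    ∃ x, IsIntegralCurve x (fun t y => g y + k t) ∧ Periodic x 1 ∧ ∀ t, x t ∈ Icc a b := by
  -- freezing `g` outside `[a, b]` makes the field bounded without changing it on `[a, b]`
  set G := IccExtend hab (g ∘ Subtype.val)
  have hG : LipschitzWith K G := by
    have := (hg.comp (LipschitzWith.subtype_val _)).comp (LipschitzWith.projIcc hab)
    rwa [mul_one, mul_one] at this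
  obtain ⟨C₁, hC₁⟩ := isBounded_iff_forall_norm_le.1 (isCompact_Icc.image hg.continuous).isBounded
  obtain ⟨C₂, hC₂⟩ := isBounded_iff_forall_norm_le.1 (hkp.isBounded_of_continuous one_ne_zero hk)
  obtain ⟨x, hx, hxp, hxI⟩ := exists_periodic_isIntegralCurve_mem_Icc_of_norm_le
    (w := fun t y => G y + k t) (fun t => by simpa using hG.add (LipschitzWith.const (k t)))
    (fun y => continuous_const.add hk) (L := C₁ + C₂)
    (fun t y => (norm_add_le _ _).trans (add_le_add (hC₁ _ ⟨_, Subtype.mem _, rfl⟩)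
      (hC₂ _ ⟨t, rfl⟩)))
    (fun t => by simp only [hkp t]) hab
    (fun t => by simpa [G, IccExtend_left] using ha t)
    (fun t => by simpa [G, IccExtend_right] using hb t)
  exact ⟨x, fun t => by simpa [G, IccExtend_of_mem hab _ (hxI t)] using hx t, hxp, hxI⟩

theorem exists_periodic_isIntegralCurve_mem_Icc_of_outward {g k : ℝ → ℝ} {K : ℝ≥0}
    (hg : LipschitzWith K g) (hk : Continuous k) (hkp : Periodic k 1) {a b : ℝ} (hab : a ≤ b)
    (ha : ∀ t, g a + k t < 0) (hb : ∀ t, 0 < g b + k t) :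
    ∃ x, IsIntegralCurve x (fun t y => g y + k t) ∧ Periodic x 1 ∧ ∀ t, x t ∈ Icc a b := by
  -- reversing time turns the repelling strip into an attracting one
  have hneg : ∀ φ : ℝ → ℝ, Periodic φ 1 → Periodic (fun t => φ (-t)) 1 := fun φ hφ t => by
    show φ (-(t + 1)) = φ (-t)
    rw [neg_add, ← sub_eq_add_neg, hφ.sub_eq]
  obtain ⟨z, hz, hzp, hzI⟩ := exists_periodic_isIntegralCurve_mem_Icc_s4 (g := fun y => -g y)
    (k := fun t => -k (-t)) (fun x y => by simpa [edist_neg_neg] using hg x y)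
    (hk.comp continuous_neg).neg (fun t => congrArg Neg.neg (hneg k hkp t)) hab
    (fun t => by linarith [ha (-t)]) (fun t => by linarith [hb (-t)])
  refine ⟨fun t => z (-t), fun t => ?_, hneg z hzp, fun t => hzI (-t)⟩
  exact ((hz (-t)).comp t (hasDerivAt_neg t)).congr_deriv (by simp [add_comm])

theorem Convex.injOn_of_hasDerivAt_ne_zero {f f' : ℝ → ℝ} {s : Set ℝ} (hs : Convex ℝ s)
    (hf : ∀ x ∈ s, HasDerivAt f (f' x) x) (hf' : ∀ x ∈ s, f' x ≠ 0) : InjOn f s := by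
  have hcont : ContinuousOn f s := fun x hx => (hf x hx).continuousAt.continuousWithinAt
  have hf'' : ∀ x ∈ interior s, HasDerivWithinAt f (f' x) (interior s) x := fun x hx =>
    (hf x (interior_subset hx)).hasDerivWithinAt
  rcases hasDerivWithinAt_forall_lt_or_forall_gt_of_forall_ne hs
    (fun x hx => (hf x hx).hasDerivWithinAt) hf' with hneg | hpos
  · exact (strictAntiOn_of_hasDerivWithinAt_neg hs hcont hf''
      fun x hx => hneg x (interior_subset hx)).injOn
  · exact (strictMonoOn_of_hasDerivWithinAt_pos hs hcont hf''
      fun x hx => hpos x (interior_subset hx)).injOn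

section TanhModel

variable {β x₀ : ℝ} {f : ℝ → ℝ}

theorem hasDerivAt_of_eq_tanh (hf : ∀ x, f x = tanh (β * x) - x) (x : ℝ) :
    HasDerivAt f (β * (1 - tanh (β * x) ^ 2) - 1) x := by
  rw [show f = fun x => tanh (β * x) - x from funext hf]
  exact (((hasDerivAt_tanh (β * x)).comp x ((hasDerivAt_id x).const_mul β)).sub
    (hasDerivAt_id x)).congr_deriv (by ring)

theorem continuous_deriv_of_eq_tanh (hf : ∀ x, f x = tanh (β * x) - x) : Continuous (deriv f) := by
  rw [show deriv f = _ from funext fun x => (hasDerivAt_of_eq_tanh hf x).deriv]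
  exact (continuous_const.mul (continuous_const.sub
    ((continuous_tanh.comp (continuous_const_mul β)).pow 2))).sub continuous_const

theorem lipschitzWith_of_eq_tanh (hf : ∀ x, f x = tanh (β * x) - x) :
    LipschitzWith (‖β‖₊ + 1) f := by
  refine lipschitzWith_of_nnnorm_deriv_le (fun x => (hasDerivAt_of_eq_tanh hf x).differentiableAt)
    fun x => ?_
  rw [(hasDerivAt_of_eq_tanh hf x).deriv, ← NNReal.coe_le_coe, coe_nnnorm, NNReal.coe_add,
    coe_nnnorm, NNReal.coe_one, Real.norm_eq_abs, Real.norm_eq_abs]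
  have hT := tanh_sq_lt_one (β * x)
  have hT₀ := sq_nonneg (tanh (β * x))
  calc |β * (1 - tanh (β * x) ^ 2) - 1| ≤ |β| * |1 - tanh (β * x) ^ 2| + |1| := by
        rw [← abs_mul]; exact abs_sub _ _
    _ ≤ |β| * 1 + 1 := by
        rw [abs_one, abs_of_pos (by linarith : 0 < 1 - tanh (β * x) ^ 2)]; gcongr; linarith
    _ = |β| + 1 := by ring

theorem odd_of_eq_tanh (hf : ∀ x, f x = tanh (β * x) - x) (x : ℝ) : f (-x) = -f x := by
  rw [hf, hf, mul_neg, tanh_neg]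
  ring

theorem exists_le_lt_neg_abs_of_eq_tanh (hf : ∀ x, f x = tanh (β * x) - x) (x₀ c : ℝ) :
    ∃ R, x₀ ≤ R ∧ f R < -|c| ∧ |c| < f (-R) := by
  have hR : f (max x₀ (|c| + 1)) < -|c| := by
    rw [hf]; linarith [tanh_lt_one (β * max x₀ (|c| + 1)), le_max_right x₀ (|c| + 1)]
  exact ⟨_, le_max_left _ _, hR, by rw [odd_of_eq_tanh hf]; linarith⟩

theorem hasDerivAt_zero_of_eq_tanh (hf : ∀ x, f x = tanh (β * x) - x) (hx₀ : 0 < x₀)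
    (hmax : ∀ y, 0 < y → f y ≤ f x₀) : HasDerivAt f 0 x₀ := by
  have hd := hasDerivAt_of_eq_tanh hf x₀
  have hmax' : IsLocalMax f x₀ := eventually_of_mem (Ioi_mem_nhds hx₀) hmax
  rwa [hmax'.hasDerivAt_eq_zero hd] at hd

theorem deriv_eq_of_eq_tanh (hf : ∀ x, f x = tanh (β * x) - x) (hx₀ : HasDerivAt f 0 x₀)
    (x : ℝ) : deriv f x = β * (tanh (β * x₀) ^ 2 - tanh (β * x) ^ 2) := by
  rw [(hasDerivAt_of_eq_tanh hf x).deriv]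
  linarith [(hasDerivAt_of_eq_tanh hf x₀).unique hx₀]

theorem pos_of_eq_tanh (hf : ∀ x, f x = tanh (β * x) - x) (hx₀ : HasDerivAt f 0 x₀) : 0 < β := by
  nlinarith [(hasDerivAt_of_eq_tanh hf x₀).unique hx₀, tanh_sq_lt_one (β * x₀)]

theorem deriv_neg_of_eq_tanh (hf : ∀ x, f x = tanh (β * x) - x) (hx₀ : HasDerivAt f 0 x₀)
    (h0 : 0 ≤ x₀) {x : ℝ} (hx : x₀ < |x|) : deriv f x < 0 := by
  have hβ := pos_of_eq_tanh hf hx₀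
  rw [deriv_eq_of_eq_tanh hf hx₀]
  refine mul_neg_of_pos_of_neg hβ (sub_neg.2 (tanh_sq_lt_tanh_sq ?_))
  rw [abs_mul, abs_mul, abs_of_nonneg h0]
  exact mul_lt_mul_of_pos_left hx (abs_pos.2 hβ.ne')

theorem deriv_pos_of_eq_tanh (hf : ∀ x, f x = tanh (β * x) - x) (hx₀ : HasDerivAt f 0 x₀)
    {x : ℝ} (hx : |x| < x₀) : 0 < deriv f x := by
  have hβ := pos_of_eq_tanh hf hx₀
  rw [deriv_eq_of_eq_tanh hf hx₀]
  refine mul_pos hβ (sub_pos.2 (tanh_sq_lt_tanh_sq ?_))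
  rw [abs_mul, abs_mul, abs_of_nonneg ((abs_nonneg x).trans hx.le)]
  exact mul_lt_mul_of_pos_left hx (abs_pos.2 hβ.ne')

theorem injOn_of_eq_tanh (hf : ∀ x, f x = tanh (β * x) - x) (hx₀ : HasDerivAt f 0 x₀)
    (h0 : 0 ≤ x₀) {s : Set ℝ} (hs : Convex ℝ s) (hne : ∀ x ∈ s, |x| ≠ x₀) : InjOn f s :=
  hs.injOn_of_hasDerivAt_ne_zero
    (fun x _ => (hasDerivAt_of_eq_tanh hf x).differentiableAt.hasDerivAt) fun x hx =>
    (hne x hx).lt_or_gt.elim (fun h => (deriv_pos_of_eq_tanh hf hx₀ h).ne')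
      fun h => (deriv_neg_of_eq_tanh hf hx₀ h0 h).ne

theorem integral_deriv_comp_neg_of_eq_tanh (hf : ∀ x, f x = tanh (β * x) - x)
    (hx₀ : HasDerivAt f 0 x₀) (h0 : 0 ≤ x₀) {x : ℝ → ℝ} (hx : Continuous x)
    (hxx₀ : ∀ t, x₀ < |x t|) : ∫ s in (0 : ℝ)..1, deriv f (x s) < 0 := by
  have := intervalIntegral.intervalIntegral_pos_of_pos_on (f := fun s => -deriv f (x s))
    (((continuous_deriv_of_eq_tanh hf).comp hx).neg.intervalIntegrable 0 1)
    (fun s _ => neg_pos.2 (deriv_neg_of_eq_tanh hf hx₀ h0 (hxx₀ s))) one_pos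
  rwa [intervalIntegral.integral_neg, neg_pos] at this

end TanhModel

section PeriodicSolution

variable {f : ℝ → ℝ} {h : ℝ} {x y : ℝ → ℝ}

theorem isPeriodicSolution_iff_s4 : IsPeriodicSolution f h x ↔
    IsIntegralCurve x (fun t y => f y + h * cos (2 * π * t)) ∧ Periodic x 1 :=
  ⟨fun ⟨hd, hx, hp⟩ => ⟨fun t => by simpa only [hx t] using (hd t).hasDerivAt, hp⟩,
    fun ⟨hx, hp⟩ => ⟨fun t => (hx t).differentiableAt, fun t => (hx t).deriv, hp⟩⟩

theorem IsPeriodicSolution.continuous (hx : IsPeriodicSolution f h x) : Continuous x :=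
  hx.1.continuous

theorem abs_mul_cos_le (h θ : ℝ) : |h * cos θ| ≤ |h| := by
  rw [abs_mul]
  exact mul_le_of_le_one_right (abs_nonneg h) (abs_cos_le_one θ)

theorem IsPeriodicSolution.apply_ne_of_abs_lt (hx : IsPeriodicSolution f h x) {c : ℝ}
    (hc : |h| < f c) (t : ℝ) : x t ≠ c := by
  obtain ⟨hx', hp⟩ := isPeriodicSolution_iff_s4.1 hx
  refine hp.ne_of_hasDerivAt_pos one_pos hx' (fun s hs => ?_) t
  rw [hs]
  linarith [neg_abs_le (h * cos (2 * π * s)), abs_mul_cos_le h (2 * π * s)]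

theorem IsPeriodicSolution.apply_ne_of_lt_neg_abs (hx : IsPeriodicSolution f h x) {c : ℝ}
    (hc : f c < -|h|) (t : ℝ) : x t ≠ c := by
  obtain ⟨hx', hp⟩ := isPeriodicSolution_iff_s4.1 hx
  refine hp.ne_of_hasDerivAt_neg one_pos hx' (fun s hs => ?_) t
  rw [hs]
  linarith [le_abs_self (h * cos (2 * π * s)), abs_mul_cos_le h (2 * π * s)]

theorem continuous_mul_cos (h : ℝ) : Continuous fun t => h * cos (2 * π * t) := by
  fun_prop

theorem periodic_mul_cos (h : ℝ) : Periodic (fun t => h * cos (2 * π * t)) 1 := fun t => by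
  simp only [mul_add, mul_one, cos_add_two_pi]

variable {K : ℝ≥0} {a b : ℝ}

theorem exists_isPeriodicSolution_mem_Ioo (hf : LipschitzWith K f) (hab : a ≤ b)
    (ha : |h| < f a) (hb : f b < -|h|) :
    ∃ x, IsPeriodicSolution f h x ∧ ∀ t, x t ∈ Ioo a b := by
  obtain ⟨x, hx, hp, hxI⟩ := exists_periodic_isIntegralCurve_mem_Icc_s4 hf (continuous_mul_cos h)
    (periodic_mul_cos h) hab
    (fun t => by linarith [neg_abs_le (h * cos (2 * π * t)), abs_mul_cos_le h (2 * π * t)])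
    (fun t => by linarith [le_abs_self (h * cos (2 * π * t)), abs_mul_cos_le h (2 * π * t)])
  have hx' := isPeriodicSolution_iff_s4.2 ⟨hx, hp⟩
  exact ⟨x, hx', fun t => ⟨(hxI t).1.lt_of_ne' (hx'.apply_ne_of_abs_lt ha t),
    (hxI t).2.lt_of_ne (hx'.apply_ne_of_lt_neg_abs hb t)⟩⟩

theorem exists_isPeriodicSolution_mem_Ioo_of_outward (hf : LipschitzWith K f) (hab : a ≤ b)
    (ha : f a < -|h|) (hb : |h| < f b) :
    ∃ x, IsPeriodicSolution f h x ∧ ∀ t, x t ∈ Ioo a b := by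
  obtain ⟨x, hx, hp, hxI⟩ := exists_periodic_isIntegralCurve_mem_Icc_of_outward hf
    (continuous_mul_cos h) (periodic_mul_cos h) hab
    (fun t => by linarith [le_abs_self (h * cos (2 * π * t)), abs_mul_cos_le h (2 * π * t)])
    (fun t => by linarith [neg_abs_le (h * cos (2 * π * t)), abs_mul_cos_le h (2 * π * t)])
  have hx' := isPeriodicSolution_iff_s4.2 ⟨hx, hp⟩
  exact ⟨x, hx', fun t => ⟨(hxI t).1.lt_of_ne' (hx'.apply_ne_of_lt_neg_abs ha t),
    (hxI t).2.lt_of_ne (hx'.apply_ne_of_abs_lt hb t)⟩⟩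

theorem IsPeriodicSolution.eq_of_injOn (hf : LipschitzWith K f) {s : Set ℝ} (hinj : InjOn f s)
    (hx : IsPeriodicSolution f h x) (hy : IsPeriodicSolution f h y) (hxs : ∀ t, x t ∈ s)
    (hys : ∀ t, y t ∈ s) : x = y :=
  (isPeriodicSolution_iff_s4.1 hx).1.eq_of_injOn (v := fun t y => f y + h * cos (2 * π * t))
    (fun t => by simpa using hf.add (LipschitzWith.const (h * cos (2 * π * t))))
    (fun t _ hu _ hv huv => hinj hu hv (add_right_cancel huv)) one_pos
    (isPeriodicSolution_iff_s4.1 hy).1 (isPeriodicSolution_iff_s4.1 hx).2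
    (isPeriodicSolution_iff_s4.1 hy).2 hxs hys

end PeriodicSolution

theorem three_solutions_tanh_general (β : ℝ)
    (f : ℝ → ℝ) (hf : ∀ x, f x = Real.tanh (β * x) - x)
    (xm : ℝ) (hxm_pos : 0 < xm)
    (hxm_max : ∀ y, 0 < y → f y ≤ f xm)
    (h : ℝ) (hh0 : 0 ≤ h) (hh : h < f xm) :
    ∃ x₁ x₂ x₃ : ℝ → ℝ,
      IsPeriodicSolution f h x₁ ∧ IsPeriodicSolution f h x₂ ∧
      IsPeriodicSolution f h x₃ ∧
      (∀ t, x₁ t < -xm) ∧ (∀ t, -xm < x₂ t ∧ x₂ t < xm) ∧ (∀ t, xm < x₃ t) ∧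
      (∫ s in (0:ℝ)..1, deriv f (x₁ s)) < 0 ∧
      (∫ s in (0:ℝ)..1, deriv f (x₃ s)) < 0 ∧
      ∀ y : ℝ → ℝ, IsPeriodicSolution f h y → y = x₁ ∨ y = x₂ ∨ y = x₃ := by
  have hcrit := hasDerivAt_zero_of_eq_tanh hf hxm_pos hxm_max
  have hLip := lipschitzWith_of_eq_tanh hf
  have hxm : |h| < f xm := by rwa [abs_of_nonneg hh0]
  have hxm' : f (-xm) < -|h| := by rw [odd_of_eq_tanh hf]; linarith
  obtain ⟨R, hxmR, hR, hR'⟩ := exists_le_lt_neg_abs_of_eq_tanh hf xm h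
  obtain ⟨x₁, hx₁, hx₁I⟩ := exists_isPeriodicSolution_mem_Ioo hLip (neg_le_neg hxmR) hR' hxm'
  obtain ⟨x₂, hx₂, hx₂I⟩ :=
    exists_isPeriodicSolution_mem_Ioo_of_outward hLip (by linarith) hxm' hxm
  obtain ⟨x₃, hx₃, hx₃I⟩ := exists_isPeriodicSolution_mem_Ioo hLip hxmR hxm hR
  refine ⟨x₁, x₂, x₃, hx₁, hx₂, hx₃, fun t => (hx₁I t).2, hx₂I, fun t => (hx₃I t).1,
    integral_deriv_comp_neg_of_eq_tanh hf hcrit hxm_pos.le hx₁.continuous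
      fun t => lt_abs.2 (.inr (lt_neg.1 (hx₁I t).2)),
    integral_deriv_comp_neg_of_eq_tanh hf hcrit hxm_pos.le hx₃.continuous
      fun t => lt_abs.2 (.inl (hx₃I t).1), fun y hy => ?_⟩
  rcases hy.continuous.trichotomy_of_forall_ne (hy.apply_ne_of_lt_neg_abs hxm')
    (hy.apply_ne_of_abs_lt hxm) 0 with hy₁ | hy₂ | hy₃
  · exact .inl <| hy.eq_of_injOn hLip (injOn_of_eq_tanh hf hcrit hxm_pos.le (convex_Iio _)
      fun x hx => (lt_abs.2 (.inr (lt_neg.1 hx))).ne') hx₁ hy₁ fun t => (hx₁I t).2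
  · exact .inr <| .inl <| hy.eq_of_injOn hLip (injOn_of_eq_tanh hf hcrit hxm_pos.le
      (convex_Ioo _ _) fun x hx => (abs_lt.2 hx).ne) hx₂ hy₂ hx₂I
  · exact .inr <| .inr <| hy.eq_of_injOn hLip (injOn_of_eq_tanh hf hcrit hxm_pos.le
      (convex_Ioi _) fun x hx => (lt_abs.2 (.inl hx)).ne') hx₃ hy₃ fun t => (hx₃I t).1

theorem three_solutions_tanh (β : ℝ) (hβ : 1 < β)
    (f : ℝ → ℝ) (hf : ∀ x, f x = Real.tanh (β * x) - x)
    (xm : ℝ) (hxm_pos : 0 < xm)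
    (hxm_max : ∀ y, 0 < y → f y ≤ f xm)
    (hxm_unique : ∀ y, 0 < y → f y = f xm → y = xm)
    (h : ℝ) (hh0 : 0 ≤ h) (hh : h < f xm) :
    ∃ x₁ x₂ x₃ : ℝ → ℝ,
      IsPeriodicSolution f h x₁ ∧ IsPeriodicSolution f h x₂ ∧
      IsPeriodicSolution f h x₃ ∧
      (∀ t, x₁ t < -xm) ∧ (∀ t, -xm < x₂ t ∧ x₂ t < xm) ∧ (∀ t, xm < x₃ t) ∧
      (∫ s in (0:ℝ)..1, deriv f (x₁ s)) < 0 ∧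
      (∫ s in (0:ℝ)..1, deriv f (x₃ s)) < 0 ∧
      ∀ y : ℝ → ℝ, IsPeriodicSolution f h y → y = x₁ ∨ y = x₂ ∨ y = x₃ :=
  three_solutions_tanh_general β f hf xm hxm_pos hxm_max h hh0 hh
end

section
/- Let f : ℝ → ℝ be continuously differentiable and suppose there exist constants α < 0, M ∈ ℝ and x₀ > 0 such that f'(x) ≤ α for all |x| > x₀ and f'(x) ≤ M for all x ∈ ℝ. Then there exists H > 0 such that for all h > H, every 1-periodic solution x of the equation x' = f(x) + h·cos(2πt) satisfies ∫₀¹ f'(x(s)) ds < 0 (i.e. every 1-periodic solution is stable). -/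
/-!
Off the band `|x| ≤ x₀` the integrand `f' (x s)` is at most `α < 0`, and everywhere it is at
most `M`, so it suffices that a solution spends little time in the band. Away from short
windows around the zeros of `cos (2πt)`, a large forcing `h cos (2πt)` dominates `f` on
`|x| ≤ x₀ + 1`, so there `x` crosses the band monotonically with speed at least `v`.
Integrating `φ (x t) x' t` for a bump function `φ` and substituting `u = x t` shows that each
such crossing takes time at most `2 (x₀ + 1) / v`.
-/

open Real

open MeasureTheory Set
open scoped Interval

theorem four_mul_le_cos_two_pi_mul {w t : ℝ} (hw : 0 ≤ w) (ht : |t| ≤ 1 / 4 - w) :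
    4 * w ≤ cos (2 * π * t) := by
  have hjordan := one_sub_mul_le_cos (x := |2 * π * t|) (abs_nonneg _)
    (by rw [abs_mul, abs_of_pos two_pi_pos]; nlinarith [pi_pos])
  rw [cos_abs, abs_mul, abs_of_pos two_pi_pos] at hjordan
  have : 2 / π * (2 * π * |t|) = 4 * |t| := by field_simp; ring
  linarith

theorem measureReal_inter_Ioc_le_add {α : Type*} [MeasurableSpace α] [LinearOrder α]
    (μ : Measure α) (A : Set α) {a b c : α} (hab : a ≤ b) (hbc : b ≤ c) :
    μ.real (A ∩ Ioc a c) ≤ μ.real (A ∩ Ioc a b) + μ.real (A ∩ Ioc b c) := by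
  rw [← Ioc_union_Ioc_eq_Ioc hab hbc, inter_union_distrib_left]
  exact measureReal_union_le _ _

theorem measureReal_inter_Ioc_zero_one_le (A : Set ℝ) {w : ℝ} (hw : 0 ≤ w)
    (hw' : w ≤ 1 / 4) :
    volume.real (A ∩ Ioc 0 1) ≤ volume.real (A ∩ Ioc 0 (1 / 4 - w)) +
      volume.real (A ∩ Ioc (1 / 4 + w) (3 / 4 - w)) + volume.real (A ∩ Ioc (3 / 4 + w) 1) +
      4 * w := by
  have hwindow : ∀ a b, a ≤ b → volume.real (A ∩ Ioc a b) ≤ b - a := fun a b hab =>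
    (measureReal_mono inter_subset_right measure_Ioc_lt_top.ne).trans
      (Real.volume_real_Ioc_of_le hab).le
  have s₁ := measureReal_inter_Ioc_le_add volume A (a := 0) (b := 1 / 4 - w) (c := 1)
    (by linarith) (by linarith)
  have s₂ := measureReal_inter_Ioc_le_add volume A (a := 1 / 4 - w) (b := 1 / 4 + w)
    (c := 1) (by linarith) (by linarith)
  have s₃ := measureReal_inter_Ioc_le_add volume A (a := 1 / 4 + w) (b := 3 / 4 - w)
    (c := 1) (by linarith) (by linarith)
  have s₄ := measureReal_inter_Ioc_le_add volume A (a := 3 / 4 - w) (b := 3 / 4 + w)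
    (c := 1) (by linarith) (by linarith)
  linarith [hwindow (1 / 4 - w) (1 / 4 + w) (by linarith),
    hwindow (3 / 4 - w) (3 / 4 + w) (by linarith)]

theorem intervalIntegral_le_add_mul_measureReal {g : ℝ → ℝ} {A : Set ℝ} {a b α M : ℝ}
    (hab : a ≤ b) (hg : IntervalIntegrable g volume a b) (hA : MeasurableSet A)
    (hin : ∀ t ∈ A, g t ≤ M) (hout : ∀ t ∉ A, g t ≤ α) :
    ∫ t in a..b, g t ≤ α * (b - a) + (M - α) * volume.real (A ∩ Ioc a b) := by
  have hind : IntervalIntegrable (A.indicator fun _ => M - α) volume a b := by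
    rw [intervalIntegrable_iff_integrableOn_Ioc_of_le hab]
    exact (integrableOn_const measure_Ioc_lt_top.ne).indicator hA
  calc ∫ t in a..b, g t ≤ ∫ t in a..b, (α + A.indicator (fun _ => M - α) t) := by
        refine intervalIntegral.integral_mono_on hab hg (intervalIntegrable_const.add hind) ?_
        intro t _
        by_cases ht : t ∈ A
        · simp only [indicator_of_mem ht]; linarith [hin t ht]
        · simp only [indicator_of_notMem ht]; linarith [hout t ht]
    _ = α * (b - a) + (M - α) * volume.real (A ∩ Ioc a b) := by
        rw [intervalIntegral.integral_add intervalIntegrable_const hind,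
          intervalIntegral.integral_const, intervalIntegral.integral_of_le hab,
          setIntegral_indicator hA, setIntegral_const, inter_comm, smul_eq_mul, smul_eq_mul]
        ring

theorem measureReal_abs_le_inter_Ioc_le {x : ℝ → ℝ} {r R v a b : ℝ} (hx : ContDiff ℝ 1 x)
    (hr : 0 < r) (hrR : r < R) (hv : 0 < v) (hab : a ≤ b)
    (hderiv : ∀ t ∈ Icc a b, |x t| < R → v ≤ deriv x t) :
    volume.real ({t | |x t| ≤ r} ∩ Ioc a b) ≤ 2 * R / v := by
  obtain ⟨hxd, hx'⟩ := contDiff_one_iff_deriv.mp hx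
  set A := {t | |x t| ≤ r}
  have hA : MeasurableSet A := measurableSet_le hxd.continuous.abs.measurable measurable_const
  let φ : ContDiffBump (0 : ℝ) := ⟨r, R, hr, hrR⟩
  -- `φ` vanishes where `|x| ≥ R`, and `x` increases wherever `|x| < R`
  have hφx : ∀ t ∈ Icc a b, A.indicator (fun _ => v) t ≤ (φ ∘ x) t * deriv x t := by
    intro t ht
    by_cases htA : t ∈ A
    · have hxr : |x t| ≤ r := htA
      rw [indicator_of_mem htA, Function.comp_apply,
        φ.one_of_mem_closedBall (by simpa using hxr), one_mul]
      exact hderiv t ht (by linarith)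
    rw [indicator_of_notMem htA]
    rcases lt_or_ge |x t| R with hxR | hxR
    · exact mul_nonneg φ.nonneg (hv.le.trans (hderiv t ht hxR))
    · rw [Function.comp_apply, φ.zero_of_le_dist (by simpa using hxR), zero_mul]
  have hind : IntervalIntegrable (A.indicator fun _ => v) volume a b := by
    rw [intervalIntegrable_iff_integrableOn_Ioc_of_le hab]
    exact (integrableOn_const measure_Ioc_lt_top.ne).indicator hA
  rw [le_div_iff₀ hv]
  calc volume.real (A ∩ Ioc a b) * v = ∫ t in a..b, A.indicator (fun _ => v) t := by
        rw [intervalIntegral.integral_of_le hab, setIntegral_indicator hA, setIntegral_const,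
          inter_comm, smul_eq_mul]
    _ ≤ ∫ t in a..b, (φ ∘ x) t * deriv x t :=
        intervalIntegral.integral_mono_on hab hind
          (((φ.continuous.comp hxd.continuous).mul hx').intervalIntegrable a b) hφx
    _ = ∫ u in x a..x b, φ u :=
        intervalIntegral.integral_comp_mul_deriv (fun t _ => (hxd t).hasDerivAt)
          hx'.continuousOn φ.continuous
    _ ≤ ∫ u in Ι (x a) (x b), ‖φ u‖ :=
        (Real.le_norm_self _).trans intervalIntegral.norm_integral_le_integral_norm_uIoc
    _ ≤ ∫ u, φ u := by
        simp only [Real.norm_eq_abs, abs_of_nonneg φ.nonneg]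
        exact setIntegral_le_integral φ.integrable (Filter.Eventually.of_forall fun _ => φ.nonneg)
    _ ≤ volume.real (Metric.closedBall (0 : ℝ) R) := φ.integral_le_measure_closedBall volume
    _ = 2 * R := Real.volume_real_closedBall (by linarith)

theorem measureReal_abs_le_inter_Ioc_le_of_cos_forcing {f x : ℝ → ℝ} {h C r R v w : ℝ}
    (hx : ContDiff ℝ 1 x) (hode : ∀ t, deriv x t = f (x t) + h * cos (2 * π * t))
    (hC : ∀ u, |u| < R → |f u| ≤ C) (hr : 0 < r) (hrR : r < R) (hv : 0 < v)
    (hw : 0 ≤ w) (hw' : w ≤ 1 / 4) (hvh : v ≤ 4 * h * w - C) :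
    volume.real ({t | |x t| ≤ r} ∩ Ioc 0 1) ≤ 4 * w + 6 * R / v := by
  set A := {t | |x t| ≤ r}
  have hC0 : 0 ≤ C := (abs_nonneg _).trans (hC 0 (by rw [abs_zero]; linarith))
  have hh : 0 ≤ h := by nlinarith
  have hup : ∀ a b, a ≤ b → (∀ t ∈ Icc a b, 4 * w ≤ cos (2 * π * t)) →
      volume.real (A ∩ Ioc a b) ≤ 2 * R / v := by
    intro a b hab hcos
    refine measureReal_abs_le_inter_Ioc_le hx hr hrR hv hab fun t ht hxt => ?_
    rw [hode]
    nlinarith [(abs_le.mp (hC _ hxt)).1, hcos t ht]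
  have hdown : ∀ a b, a ≤ b → (∀ t ∈ Icc a b, cos (2 * π * t) ≤ -(4 * w)) →
      volume.real (A ∩ Ioc a b) ≤ 2 * R / v := by
    intro a b hab hcos
    refine (measureReal_abs_le_inter_Ioc_le hx.neg hr hrR hv hab
      fun t ht hxt => ?_).trans_eq' ?_
    · rw [abs_neg] at hxt
      change v ≤ deriv (-x) t
      rw [deriv.neg, hode]
      nlinarith [(abs_le.mp (hC _ hxt)).2, hcos t ht]
    · simp only [A, abs_neg]
  have hcos₁ : ∀ t ∈ Icc 0 (1 / 4 - w), 4 * w ≤ cos (2 * π * t) := fun t ht =>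
    four_mul_le_cos_two_pi_mul hw (by rw [abs_of_nonneg ht.1]; exact ht.2)
  have hcos₂ : ∀ t ∈ Icc (1 / 4 + w) (3 / 4 - w), cos (2 * π * t) ≤ -(4 * w) := by
    intro t ht
    have := four_mul_le_cos_two_pi_mul hw (t := t - 1 / 2)
      (abs_le.mpr ⟨by linarith [ht.1], by linarith [ht.2]⟩)
    rw [show 2 * π * (t - 1 / 2) = 2 * π * t - π by ring, cos_sub_pi] at this
    linarith
  have hcos₃ : ∀ t ∈ Icc (3 / 4 + w) 1, 4 * w ≤ cos (2 * π * t) := by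
    intro t ht
    have := four_mul_le_cos_two_pi_mul hw (t := t - 1)
      (abs_le.mpr ⟨by linarith [ht.1], by linarith [ht.2]⟩)
    rwa [show 2 * π * (t - 1) = 2 * π * t - 2 * π by ring, cos_sub_two_pi] at this
  have : 6 * R / v = 3 * (2 * R / v) := by ring
  linarith [measureReal_inter_Ioc_zero_one_le A hw hw', hup _ _ (by linarith) hcos₁,
    hdown _ _ (by linarith) hcos₂, hup _ _ (by linarith) hcos₃]

theorem IsPeriodicSolution.contDiff {f : ℝ → ℝ} {h : ℝ} {x : ℝ → ℝ} (hf : Continuous f)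
    (hx : IsPeriodicSolution f h x) : ContDiff ℝ 1 x := by
  obtain ⟨hxd, hode, -⟩ := hx
  refine contDiff_one_iff_deriv.mpr ⟨hxd, ?_⟩
  rw [funext hode]
  have := hxd.continuous
  fun_prop

theorem all_solutions_stable_large_h (f : ℝ → ℝ) (hf : ContDiff ℝ 1 f)
    (α M x₀ : ℝ) (hα : α < 0) (hx₀ : 0 < x₀)
    (hder_out : ∀ x : ℝ, x₀ < |x| → deriv f x ≤ α)
    (hder_all : ∀ x : ℝ, deriv f x ≤ M) :
    ∃ H > (0:ℝ), ∀ h > H, ∀ x : ℝ → ℝ,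
      IsPeriodicSolution f h x → (∫ s in (0:ℝ)..1, deriv f (x s)) < 0 := by
  obtain ⟨C, hC⟩ := (isCompact_closedBall (0 : ℝ) (x₀ + 1)).exists_bound_of_continuousOn
    hf.continuous.continuousOn
  set K := max M 0 - α
  have hK : -α ≤ K := by linarith [le_max_right M 0]
  set ε := -α / (2 * K)
  have hε : 0 < ε := div_pos (by linarith) (by linarith)
  have hεK : K * ε = -α / 2 := by
    simp only [ε]
    field_simp [show K ≠ 0 by linarith]
  have hε_le : ε ≤ 1 / 2 := by rw [div_le_iff₀ (by linarith)]; linarith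
  set v := 12 * (x₀ + 1) / ε
  have hv : 0 < v := by positivity
  refine ⟨(|C| + v) / (ε / 2), by positivity, fun h hh x hx => ?_⟩
  have hband : volume.real ({t | |x t| ≤ x₀} ∩ Ioc 0 1) ≤ ε := by
    have hvh : v ≤ 4 * h * (ε / 8) - C := by
      rw [gt_iff_lt, div_lt_iff₀ (by positivity)] at hh
      linarith [le_abs_self C]
    refine (measureReal_abs_le_inter_Ioc_le_of_cos_forcing (hx.contDiff hf.continuous) hx.2.1
      (fun u hu => hC u (by simpa using hu.le)) hx₀ (lt_add_one x₀) hv (by positivity)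
      (by linarith) hvh).trans_eq ?_
    simp only [v]
    field_simp
    ring
  have hx' := (hx.contDiff hf.continuous).continuous
  calc ∫ s in (0:ℝ)..1, deriv f (x s)
      ≤ α * (1 - 0) + K * volume.real ({t | |x t| ≤ x₀} ∩ Ioc 0 1) :=
        intervalIntegral_le_add_mul_measureReal zero_le_one
          (((hf.continuous_deriv le_rfl).comp hx').intervalIntegrable _ _)
          (measurableSet_le hx'.abs.measurable measurable_const)
          (fun _ _ => (hder_all _).trans (le_max_left M 0))
          (fun _ ht => hder_out _ (not_le.mp ht))
    _ ≤ α + K * ε := by rw [sub_zero, mul_one]; gcongr; linarith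
    _ < 0 := by linarith
end

section
/- Let β > 0 and let f(x) = tanh(βx) − x, so that f'(x) = β − 1 − β·tanh²(βx). Let x₀ : ℝ → ℝ be a continuous 1-periodic function and let v : ℝ → ℝ be a differentiable 1-periodic function satisfying v'(t) = f'(x₀(t))·v(t) for all t. Put ζ(s) = tanh(β·x₀(s)). Then ∫₀¹ ζ(s)²·v(s)² ds = ((β−1)/β)·∫₀¹ v(s)² ds. -/
/-!
Since `f' = β - 1 - β tanh²(β ·)`, the linearized equation says pointwise that
`β ζ² v² = (β - 1) v² - v v'`. The last term is half the derivative of `v²`, whose integral over a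
period vanishes; integrability of `ζ² v²` comes from `ζ² v² ≤ v²`, as `|tanh| < 1`.
-/

open Real

theorem Real.hasDerivAt_tanh_s11 (x : ℝ) : HasDerivAt tanh (1 - tanh x ^ 2) x := by
  have h := (hasDerivAt_sinh x).div (hasDerivAt_cosh x) (cosh_pos x).ne'
  rw [show tanh = sinh / cosh from funext tanh_eq_sinh_div_cosh]
  refine h.congr_deriv ?_
  rw [Pi.div_apply]
  field_simp

theorem deriv_tanh_mul_sub_id (β x : ℝ) :
    deriv (fun y => tanh (β * y) - y) x = β - 1 - β * tanh (β * x) ^ 2 := by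
  have h : HasDerivAt (fun y => tanh (β * y) - y) ((1 - tanh (β * x) ^ 2) * (β * 1) - 1) x :=
    ((hasDerivAt_tanh_s11 (β * x)).comp x ((hasDerivAt_id x).const_mul β)).sub (hasDerivAt_id x)
  rw [h.deriv]
  ring

theorem integral_mul_deriv_self {v : ℝ → ℝ} {a b : ℝ}
    (hv : ∀ t ∈ Set.uIcc a b, DifferentiableAt ℝ v t)
    (hint : IntervalIntegrable (fun t => v t * deriv v t) MeasureTheory.volume a b) :
    ∫ t in a..b, v t * deriv v t = (v b ^ 2 - v a ^ 2) / 2 := by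
  have hderiv : ∀ t ∈ Set.uIcc a b, HasDerivAt (fun s => v s ^ 2 / 2) (v t * deriv v t) t := by
    intro t ht
    have h : HasDerivAt (fun s => v s ^ 2 / 2) (↑2 * v t ^ (2 - 1) * deriv v t / 2) t :=
      ((hv t ht).hasDerivAt.pow 2).div_const 2
    exact h.congr_deriv (by ring)
  rw [intervalIntegral.integral_eq_sub_of_hasDerivAt hderiv hint]
  ring

-- `ζ` itself need not be measurable; `ζ² v²` is, being expressed through `v` and `deriv v`.
theorem intervalIntegrable_sq_mul_sq_of_mul_deriv_eq {v ζ : ℝ → ℝ} {α β a b : ℝ}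
    (hv : Continuous v) (hζ : ∀ s, ζ s ^ 2 ≤ 1) (hβ : β ≠ 0)
    (h : ∀ s, v s * deriv v s = α * v s ^ 2 - β * (ζ s ^ 2 * v s ^ 2)) :
    IntervalIntegrable (fun s => ζ s ^ 2 * v s ^ 2) MeasureTheory.volume a b := by
  have hrepr : (fun s => ζ s ^ 2 * v s ^ 2) = fun s => (α * v s ^ 2 - v s * deriv v s) / β := by
    funext s
    rw [h]
    field_simp
    ring
  refine ((hv.pow 2).intervalIntegrable a b).mono_fun' ?_ (Filter.Eventually.of_forall fun s => ?_)
  · rw [hrepr]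
    exact ((((hv.measurable.pow_const 2).const_mul _).sub
      (hv.measurable.mul (measurable_deriv v))).div_const β).aestronglyMeasurable
  · simp only [Pi.pow_apply, Real.norm_eq_abs]
    rw [abs_of_nonneg (by positivity)]
    exact mul_le_of_le_one_left (sq_nonneg _) (hζ s)

open intervalIntegral in
theorem zeta_squared_identity_general (β : ℝ) (hβ : 0 < β)
    (f : ℝ → ℝ) (hf : ∀ x, f x = Real.tanh (β * x) - x)
    (x₀ : ℝ → ℝ)
    (v : ℝ → ℝ) (hv : Differentiable ℝ v) (hvper : ∀ t, v (t + 1) = v t)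
    (hveq : ∀ t, deriv v t = deriv f (x₀ t) * v t)
    (ζ : ℝ → ℝ) (hζ : ∀ s, ζ s = Real.tanh (β * x₀ s)) :
    (∫ s in (0:ℝ)..1, ζ s ^ 2 * v s ^ 2) =
      ((β - 1) / β) * ∫ s in (0:ℝ)..1, v s ^ 2 := by
  obtain rfl : f = fun y => tanh (β * y) - y := funext hf
  have hpointwise : ∀ s, v s * deriv v s = (β - 1) * v s ^ 2 - β * (ζ s ^ 2 * v s ^ 2) := by
    intro s
    rw [hveq, deriv_tanh_mul_sub_id, ← hζ]
    ring
  have hv_sq : IntervalIntegrable (fun s => v s ^ 2) MeasureTheory.volume 0 1 :=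
    (hv.continuous.pow 2).intervalIntegrable 0 1
  have hζv_sq : IntervalIntegrable (fun s => ζ s ^ 2 * v s ^ 2) MeasureTheory.volume 0 1 :=
    intervalIntegrable_sq_mul_sq_of_mul_deriv_eq hv.continuous
      (fun s => hζ s ▸ (tanh_sq_lt_one _).le) hβ.ne' hpointwise
  have hzero : ∫ s in (0:ℝ)..1, v s * deriv v s = 0 := by
    have hint : IntervalIntegrable (fun s => v s * deriv v s) MeasureTheory.volume 0 1 := by
      simp_rw [hpointwise]
      exact (hv_sq.const_mul _).sub (hζv_sq.const_mul _)
    rw [integral_mul_deriv_self (fun t _ => hv t) hint, show v 1 = v 0 by simpa using hvper 0,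
      sub_self, zero_div]
  simp_rw [hpointwise] at hzero
  rw [integral_sub (hv_sq.const_mul _) (hζv_sq.const_mul _), integral_const_mul,
    integral_const_mul] at hzero
  rw [div_mul_eq_mul_div, eq_div_iff hβ.ne']
  linarith

theorem zeta_squared_identity (β : ℝ) (hβ : 0 < β)
    (f : ℝ → ℝ) (hf : ∀ x, f x = Real.tanh (β * x) - x)
    (x₀ : ℝ → ℝ) (hx₀ : Continuous x₀) (hx₀per : ∀ t, x₀ (t + 1) = x₀ t)
    (v : ℝ → ℝ) (hv : Differentiable ℝ v) (hvper : ∀ t, v (t + 1) = v t)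
    (hveq : ∀ t, deriv v t = deriv f (x₀ t) * v t)
    (ζ : ℝ → ℝ) (hζ : ∀ s, ζ s = Real.tanh (β * x₀ s)) :
    (∫ s in (0:ℝ)..1, ζ s ^ 2 * v s ^ 2) =
      ((β - 1) / β) * ∫ s in (0:ℝ)..1, v s ^ 2 :=
  zeta_squared_identity_general β hβ f hf x₀ v hv hvper hveq ζ hζ
end

section
/- Let ε > 0 and h ≥ 0, and define x(t) = 1 + h·(cos(2πt) + 2πε·sin(2πt))/(1 + 4π²ε²). Then x is a 1-periodic solution of the equation ε·x'(t) = 1 − x(t) + h·cos(2πt), its minimum value over ℝ equals 1 − h/√(1 + 4π²ε²), and consequently x(t) > 0 for all t if and only if h < h_ca, where h_ca = √(1 + 4π²ε²); at h = h_ca the solution attains the value 0. -/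
/-!
The candidate is the steady-state response of the relaxation equation to harmonic forcing, so the
equation and 1-periodicity are direct computations. Its oscillating part is `cos θ + b sin θ` with
`b = 2πε`, whose minimum `-√(1 + b²)` (Cauchy–Schwarz) is attained at `θ = π + arctan b`. Hence the
minimum of `x` is `1 - h √(1 + b²) / (1 + b²) = 1 - h / √(1 + b²)`, and `x` is positive exactly when
this minimum is.
-/

open Real

theorem neg_sqrt_one_add_sq_le_cos_add_mul_sin (b θ : ℝ) : -√(1 + b ^ 2) ≤ cos θ + b * sin θ :=
  (abs_le.mp <| abs_le_sqrt <| by nlinarith [sq_nonneg (b * cos θ - sin θ), sin_sq_add_cos_sq θ]).1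

theorem cos_add_mul_sin_pi_add_arctan (b : ℝ) :
    cos (π + arctan b) + b * sin (π + arctan b) = -√(1 + b ^ 2) := by
  rw [cos_add, sin_add, cos_pi, sin_pi, cos_arctan, sin_arctan]
  field_simp
  rw [sq_sqrt (by positivity)]
  ring

theorem IsLeast.forall_lt_iff {α β : Type*} [Preorder β] {f : α → β} {m : β}
    (hm : IsLeast (Set.range f) m) (a : β) : (∀ t, a < f t) ↔ a < m :=
  ⟨fun h => hm.1.choose_spec ▸ h _, fun h t => h.trans_le (hm.2 ⟨t, rfl⟩)⟩

noncomputable def periodicResponse (ε ω h t : ℝ) : ℝ :=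
  1 + h * (cos (ω * t) + ε * ω * sin (ω * t)) / (1 + (ε * ω) ^ 2)

section periodicResponse

variable (ε ω h : ℝ)

theorem hasDerivAt_periodicResponse (t : ℝ) :
    HasDerivAt (periodicResponse ε ω h)
      (h * ω * (ε * ω * cos (ω * t) - sin (ω * t)) / (1 + (ε * ω) ^ 2)) t := by
  have hθ : HasDerivAt (ω * ·) ω t := by simpa using (hasDerivAt_id t).const_mul ω
  have hcos := (hasDerivAt_cos (ω * t)).comp t hθ
  have hsin := (hasDerivAt_sin (ω * t)).comp t hθ
  exact ((((hcos.add (hsin.const_mul (ε * ω))).const_mul h).div_const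
    (1 + (ε * ω) ^ 2)).const_add 1).congr_deriv (by ring)

theorem differentiable_periodicResponse : Differentiable ℝ (periodicResponse ε ω h) :=
  fun t => (hasDerivAt_periodicResponse ε ω h t).differentiableAt

theorem periodicResponse_ode (t : ℝ) :
    ε * deriv (periodicResponse ε ω h) t = 1 - periodicResponse ε ω h t + h * cos (ω * t) := by
  rw [(hasDerivAt_periodicResponse ε ω h t).deriv, periodicResponse]
  field_simp
  ring

variable {ω}

theorem periodic_periodicResponse (hω : ω ≠ 0) :
    Function.Periodic (periodicResponse ε ω h) (2 * π / ω) := by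
  intro t
  simp only [periodicResponse, mul_add, mul_div_cancel₀ _ hω, cos_add_two_pi, sin_add_two_pi]

theorem isLeast_range_periodicResponse {h : ℝ} (hh : 0 ≤ h) (hω : ω ≠ 0) :
    IsLeast (Set.range (periodicResponse ε ω h)) (1 - h / √(1 + (ε * ω) ^ 2)) := by
  set s := √(1 + (ε * ω) ^ 2)
  have hs2 : s ^ 2 = 1 + (ε * ω) ^ 2 := sq_sqrt (by positivity)
  have hvalue (A : ℝ) (hA : A = -s) : 1 + h * A / (1 + (ε * ω) ^ 2) = 1 - h / s := by
    rw [hA, ← hs2]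
    field_simp
    ring
  refine ⟨⟨(π + arctan (ε * ω)) / ω, ?_⟩, ?_⟩
  · rw [periodicResponse, mul_div_cancel₀ _ hω]
    exact hvalue _ (cos_add_mul_sin_pi_add_arctan _)
  · rintro _ ⟨t, rfl⟩
    rw [periodicResponse, ← hvalue _ rfl]
    gcongr
    exact neg_sqrt_one_add_sq_le_cos_add_mul_sin _ _

end periodicResponse

theorem asymmetric_solution_touches_zero_general (ε h : ℝ) (hh : 0 ≤ h)
    (x : ℝ → ℝ)
    (hx : ∀ t, x t = 1 + h * (Real.cos (2 * Real.pi * t) +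
      2 * Real.pi * ε * Real.sin (2 * Real.pi * t)) / (1 + 4 * Real.pi ^ 2 * ε ^ 2)) :
    Differentiable ℝ x ∧
    (∀ t, ε * deriv x t = 1 - x t + h * Real.cos (2 * Real.pi * t)) ∧
    (∀ t, x (t + 1) = x t) ∧
    IsLeast (Set.range x) (1 - h / Real.sqrt (1 + 4 * Real.pi ^ 2 * ε ^ 2)) ∧
    ((∀ t, 0 < x t) ↔ h < Real.sqrt (1 + 4 * Real.pi ^ 2 * ε ^ 2)) ∧
    (h = Real.sqrt (1 + 4 * Real.pi ^ 2 * ε ^ 2) → ∃ t, x t = 0) := by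
  obtain rfl : x = periodicResponse ε (2 * π) h :=
    funext fun t => by rw [hx, periodicResponse]; ring
  have h2π : 2 * π ≠ 0 := by positivity
  have hs : 0 < √(1 + 4 * π ^ 2 * ε ^ 2) := by positivity
  have hmin := isLeast_range_periodicResponse ε hh h2π
  rw [show (ε * (2 * π)) ^ 2 = 4 * π ^ 2 * ε ^ 2 by ring] at hmin
  refine ⟨differentiable_periodicResponse _ _ _, periodicResponse_ode _ _ _, ?_, hmin, ?_, ?_⟩
  · simpa [div_self h2π] using periodic_periodicResponse ε h h2π
  · rw [hmin.forall_lt_iff, sub_pos, div_lt_one hs]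
  · rintro rfl
    obtain ⟨t, ht⟩ := hmin.1
    exact ⟨t, by rw [ht, div_self hs.ne', sub_self]⟩

theorem asymmetric_solution_touches_zero (ε h : ℝ) (hε : 0 < ε) (hh : 0 ≤ h)
    (x : ℝ → ℝ)
    (hx : ∀ t, x t = 1 + h * (Real.cos (2 * Real.pi * t) +
      2 * Real.pi * ε * Real.sin (2 * Real.pi * t)) / (1 + 4 * Real.pi ^ 2 * ε ^ 2)) :
    Differentiable ℝ x ∧
    (∀ t, ε * deriv x t = 1 - x t + h * Real.cos (2 * Real.pi * t)) ∧
    (∀ t, x (t + 1) = x t) ∧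
    IsLeast (Set.range x) (1 - h / Real.sqrt (1 + 4 * Real.pi ^ 2 * ε ^ 2)) ∧
    ((∀ t, 0 < x t) ↔ h < Real.sqrt (1 + 4 * Real.pi ^ 2 * ε ^ 2)) ∧
    (h = Real.sqrt (1 + 4 * Real.pi ^ 2 * ε ^ 2) → ∃ t, x t = 0) :=
  asymmetric_solution_touches_zero_general ε h hh x hx
end
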